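/- arXiv:2001.06511 — 13 statements merged into one kernel-verified Lean document; each statement's English description precedes it below -/
import Mathlib

section
/- Let τ_d := sup_{λ ≤ 0} inf_{x ∈ 𝒳} (f(x) − λ·g(x)) be the Lagrangian dual value of (P). Then τ_d = inf{τ ∈ ℝ : v(τ) ≤ 0} (as an infimum in the extended reals), and v(τ) ≤ 0 for every τ > τ_d. -/
/-- **Duality of the value function root (Lagrangian form).**
Let `𝒳 ⊆ ℝⁿ` be a nonempty convex set, `f, g` convex lower-semicontinuous functions,
and suppose the primal problem `min f(x) s.t. x ∈ 𝒳, g(x) ≤ 0` is feasible with finite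
optimal value.  Let `τd := sup_{λ ≤ 0} inf_{x ∈ 𝒳} (f(x) - λ g(x))` be the Lagrangian
dual value and `v(τ) := inf {g(x) : x ∈ 𝒳, f(x) ≤ τ}` the level-set value function
(with `inf ∅ = +∞`, values in the extended reals).  Then
`τd = inf {τ ∈ ℝ : v(τ) ≤ 0}` and `v(τ) ≤ 0` for every `τ > τd`. -/
theorem value_function_root_duality {n : ℕ}
    (𝒳 : Set (EuclideanSpace ℝ (Fin n))) (hXne : 𝒳.Nonempty) (hXcvx : Convex ℝ 𝒳)
    (f g : EuclideanSpace ℝ (Fin n) → ℝ)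
    (hf : ConvexOn ℝ Set.univ f) (hflsc : LowerSemicontinuous f)
    (hg : ConvexOn ℝ Set.univ g) (hglsc : LowerSemicontinuous g)
    (hfeas : ∃ x ∈ 𝒳, g x ≤ 0)
    (hbdd : ∃ B : ℝ, ∀ x ∈ 𝒳, g x ≤ 0 → B ≤ f x)
    (v : ℝ → EReal)
    (hv : ∀ τ : ℝ, v τ = sInf {y : EReal | ∃ x ∈ 𝒳, f x ≤ τ ∧ y = (g x : EReal)})
    (τd : EReal)
    (hτd : τd = ⨆ (lam : ℝ) (_ : lam ≤ 0), ⨅ x ∈ 𝒳, ((f x - lam * g x : ℝ) : EReal)) :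
    τd = sInf {t : EReal | ∃ τ : ℝ, t = (τ : EReal) ∧ v τ ≤ 0} ∧
      ∀ τ : ℝ, τd < (τ : EReal) → v τ ≤ 0 := by
  -- Part 2 first: v τ ≤ 0 for all τ > τd.
  have key : ∀ τ : ℝ, τd < (τ : EReal) → v τ ≤ 0 := by
    intro τ hlt
    by_contra hv0
    rw [not_le] at hv0
    obtain ⟨δ, hδ0, hδv⟩ := EReal.exists_between_coe_real hv0
    have hδ0' : (0 : ℝ) < δ := by exact_mod_cast hδ0
    have hδ : ∀ x ∈ 𝒳, f x ≤ τ → δ ≤ g x := by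
      intro x hx hfx
      by_contra hgx
      rw [not_le] at hgx
      have hmem : (g x : EReal) ∈ {y : EReal | ∃ x ∈ 𝒳, f x ≤ τ ∧ y = (g x : EReal)} :=
        ⟨x, hx, hfx, rfl⟩
      have h1 : v τ ≤ (g x : EReal) := by rw [hv τ]; exact sInf_le hmem
      have h2 : (g x : EReal) < (δ : EReal) := by exact_mod_cast hgx
      exact absurd (hδv.trans_le (h1.trans h2.le)) (lt_irrefl _)
    obtain ⟨r, hr1, hr2⟩ := EReal.exists_between_coe_real hlt
    have hrτ : r < τ := by exact_mod_cast hr2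
    -- the convex image set
    set C : Set (ℝ × ℝ) := {p | ∃ x ∈ 𝒳, f x ≤ p.1 ∧ g x ≤ p.2} with hCdef
    have hCcvx : Convex ℝ C := by
      rintro p ⟨x, hx, hpx1, hpx2⟩ q ⟨y, hy, hqy1, hqy2⟩ a b ha hb hab
      refine ⟨a • x + b • y, hXcvx hx hy ha hb hab, ?_, ?_⟩
      · have := hf.2 (Set.mem_univ x) (Set.mem_univ y) ha hb hab
        simp only [smul_eq_mul] at this
        simp only [Prod.fst_add, Prod.smul_fst, smul_eq_mul]
        nlinarith [mul_le_mul_of_nonneg_left hpx1 ha, mul_le_mul_of_nonneg_left hqy1 hb]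
      · have := hg.2 (Set.mem_univ x) (Set.mem_univ y) ha hb hab
        simp only [smul_eq_mul] at this
        simp only [Prod.snd_add, Prod.smul_snd, smul_eq_mul]
        nlinarith [mul_le_mul_of_nonneg_left hpx2 ha, mul_le_mul_of_nonneg_left hqy2 hb]
    -- the point (r, δ/2) is not in the closure of C
    have hzC : ((r, δ / 2) : ℝ × ℝ) ∉ closure C := by
      have hopen : IsOpen {p : ℝ × ℝ | p.1 < τ ∧ p.2 < δ} :=
        (isOpen_lt continuous_fst continuous_const).inter
          (isOpen_lt continuous_snd continuous_const)
      have hdisj : Disjoint C {p : ℝ × ℝ | p.1 < τ ∧ p.2 < δ} := by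
        rw [Set.disjoint_left]
        rintro p ⟨x, hx, h1, h2⟩ ⟨hp1, hp2⟩
        exact absurd ((hδ x hx (h1.trans hp1.le)).trans h2) (not_le.2 hp2)
      have hdisj2 := (hdisj.closure_left hopen).symm
      intro hmem
      exact (Set.disjoint_left.1 hdisj2.symm) hmem ⟨hrτ, by linarith⟩
    obtain ⟨φ, u, hu1, hu2⟩ :=
      geometric_hahn_banach_closed_point hCcvx.closure isClosed_closure hzC
    set a := φ (1, 0) with hadef
    set b := φ (0, 1) with hbdef
    have hφ : ∀ p q : ℝ, φ (p, q) = p * a + q * b := by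
      intro p q
      have hpq : ((p, q) : ℝ × ℝ) = p • ((1 : ℝ), (0 : ℝ)) + q • ((0 : ℝ), (1 : ℝ)) := by
        simp [Prod.ext_iff]
      conv_lhs => rw [hpq]
      rw [map_add, map_smul, map_smul, smul_eq_mul, smul_eq_mul]
    have hmemC : ∀ x ∈ 𝒳, ((f x, g x) : ℝ × ℝ) ∈ C := fun x hx => ⟨x, hx, le_refl _, le_refl _⟩
    have hlt' : ∀ x ∈ 𝒳, f x * a + g x * b < u := by
      intro x hx
      have := hu1 _ (subset_closure (hmemC x hx))
      rwa [hφ] at this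
    have hu2' : u < r * a + (δ / 2) * b := by rwa [hφ] at hu2
    obtain ⟨x0, hx0⟩ := hXne
    -- a ≤ 0
    have ha : a ≤ 0 := by
      by_contra h
      rw [not_le] at h
      set c := f x0 * a + g x0 * b with hcdef
      set t := max ((u - c) / a) 0 + 1 with htdef
      have ht0 : 0 ≤ t := by positivity
      have hmem : ((f x0 + t, g x0) : ℝ × ℝ) ∈ C := ⟨x0, hx0, by simp; linarith, le_refl _⟩
      have hlt2 := hu1 _ (subset_closure hmem)
      rw [hφ] at hlt2
      have h1 : (u - c) / a * a = u - c := div_mul_cancel₀ _ h.ne'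
      have h2 : (u - c) / a * a ≤ t * a :=
        mul_le_mul_of_nonneg_right (by rw [htdef]; nlinarith [le_max_left ((u - c) / a) 0]) h.le
      have h3 : u - c ≤ t * a := h1 ▸ h2
      have h4 : (f x0 + t) * a + g x0 * b = c + t * a := by rw [hcdef]; ring
      rw [h4] at hlt2
      linarith
    -- b ≤ 0
    have hb : b ≤ 0 := by
      by_contra h
      rw [not_le] at h
      set c := f x0 * a + g x0 * b with hcdef
      set t := max ((u - c) / b) 0 + 1 with htdef
      have ht0 : 0 ≤ t := by positivity
      have hmem : ((f x0, g x0 + t) : ℝ × ℝ) ∈ C := ⟨x0, hx0, le_refl _, by simp; linarith⟩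
      have hlt2 := hu1 _ (subset_closure hmem)
      rw [hφ] at hlt2
      have h1 : (u - c) / b * b = u - c := div_mul_cancel₀ _ h.ne'
      have h2 : (u - c) / b * b ≤ t * b :=
        mul_le_mul_of_nonneg_right (by rw [htdef]; nlinarith [le_max_left ((u - c) / b) 0]) h.le
      have h3 : u - c ≤ t * b := h1 ▸ h2
      have h4 : f x0 * a + (g x0 + t) * b = c + t * b := by rw [hcdef]; ring
      rw [h4] at hlt2
      linarith
    obtain ⟨x1, hx1, hgx1⟩ := hfeas
    have hlt1 := hlt' x1 hx1
    -- a cannot be 0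
    have ha' : a < 0 := by
      rcases ha.lt_or_eq with h | h
      · exact h
      · exfalso
        rw [h] at hlt1 hu2'
        nlinarith [mul_nonneg (neg_nonneg.2 hgx1) (neg_nonneg.2 hb),
          mul_nonpos_of_nonneg_of_nonpos (by linarith : (0 : ℝ) ≤ δ / 2) hb]
    set lam := -(b / a) with hlamdef
    have hlam0 : lam ≤ 0 := by
      have : 0 ≤ b / a := by
        rw [div_nonneg_iff]
        exact Or.inr ⟨hb, ha'.le⟩
      simp only [hlamdef]; linarith
    have key2 : ∀ x ∈ 𝒳, r ≤ f x - lam * g x := by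
      intro x hx
      have h1 := hlt' x hx
      have h3 : δ / 2 * b ≤ 0 := mul_nonpos_of_nonneg_of_nonpos (by linarith) hb
      have heq : (f x - lam * g x - r) * a = f x * a + g x * b - r * a := by
        have hane : a ≠ 0 := ha'.ne
        rw [hlamdef]
        field_simp
        ring
      have h5 : (f x - lam * g x - r) * a < 0 := by rw [heq]; linarith
      nlinarith [h5, ha']
    have hfin : (r : EReal) ≤ ⨅ x ∈ 𝒳, ((f x - lam * g x : ℝ) : EReal) :=
      le_iInf₂ fun x hx => by exact_mod_cast key2 x hx
    have : (r : EReal) ≤ τd := by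
      rw [hτd]; exact le_iSup₂_of_le lam hlam0 hfin
    exact absurd (this.trans_lt hr1) (lt_irrefl _)
  constructor
  · apply le_antisymm
    · apply le_sInf
      rintro t ⟨τ, rfl, hvτ⟩
      rw [hτd]
      apply iSup₂_le
      intro lam hlam
      by_contra hcon
      rw [not_le] at hcon
      obtain ⟨s, hs1, hs2⟩ := EReal.exists_between_coe_real hcon
      have hτs : τ < s := by exact_mod_cast hs1
      set ε := (s - τ) / (1 - lam) with hεdef
      have hεpos : 0 < ε := div_pos (by linarith) (by linarith)
      have hsinf : sInf {y : EReal | ∃ x ∈ 𝒳, f x ≤ τ ∧ y = (g x : EReal)} < (ε : EReal) := by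
        rw [← hv τ]
        exact lt_of_le_of_lt hvτ (by exact_mod_cast hεpos)
      obtain ⟨y, ⟨x, hx, hfx, rfl⟩, hyε⟩ := sInf_lt_iff.1 hsinf
      have hgx : g x < ε := by exact_mod_cast hyε
      have hne : (1 : ℝ) - lam ≠ 0 := ne_of_gt (by linarith)
      have hcancel : (1 - lam) * ε = s - τ := by
        rw [hεdef, mul_div_assoc']
        exact mul_div_cancel_left₀ _ hne
      have hle : f x - lam * g x ≤ s := by
        have h1 : -lam * g x ≤ -lam * ε :=
          mul_le_mul_of_nonneg_left hgx.le (by linarith)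
        have h2 : -lam * ε ≤ (1 - lam) * ε := by nlinarith
        linarith
      have hfinal : ⨅ x ∈ 𝒳, ((f x - lam * g x : ℝ) : EReal) ≤ (s : EReal) :=
        (iInf₂_le x hx).trans (by exact_mod_cast hle)
      exact absurd (hs2.trans_le hfinal) (lt_irrefl _)
    · by_contra hcon
      rw [not_le] at hcon
      obtain ⟨s, hs1, hs2⟩ := EReal.exists_between_coe_real hcon
      have hmem : (s : EReal) ∈ {t : EReal | ∃ τ : ℝ, t = (τ : EReal) ∧ v τ ≤ 0} :=
        ⟨s, rfl, key s hs1⟩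
      exact absurd (hs2.trans_le (sInf_le hmem)) (lt_irrefl _)
  · exact key
end

section
/- Let F : ℝⁿ × ℝᵐ → ℝ ∪ {+∞} be a proper convex function, p(u) := inf_{x ∈ ℝⁿ} F(x, u), and assume p(0) is finite. Define the dual value τ_d := p**(0) = sup_{μ ∈ ℝᵐ} inf_{u ∈ ℝᵐ} (p(u) − ⟨μ, u⟩), and the generalized level-set value function v(τ) := inf{‖u‖ : u ∈ ℝᵐ, ∃ x ∈ ℝⁿ with F(x, u) ≤ τ}, where ‖·‖ is the Euclidean norm. Then τ_d = inf{τ ∈ ℝ : v(τ) = 0} and v(τ) = 0 for every τ > τ_d. -/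
open scoped RealInnerProductSpace

/-!
The perturbation function `p` is convex: its strict epigraph is a linear projection of that of
`F`. If `v τ = 0`, there are points `u → 0` with `p u ≤ τ`, so for every `μ` the infimum of
`p u - ⟪μ, u⟫` is at most `τ` (weak duality). If `v τ > 0`, then `p ≥ τ` on a ball around `0`;
Hahn–Banach separation of `ball 0 ε × (-∞, τ)` from the strict epigraph of `p` yields a
hyperplane which is not vertical because `p 0 < ⊤`, i.e. some `μ` with `τ ≤ p u - ⟪μ, u⟫` for
all `u`, whence `τ ≤ τd`.
-/

/-- Strict, so that the epigraph of `u ↦ ⨅ x, F (x, u)` is exactly a projection of that of `F`. -/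
def strictEpigraph {α : Type*} (f : α → EReal) : Set (α × ℝ) := {q | f q.1 < q.2}

section Convexity

variable {E U : Type*} [AddCommGroup E] [Module ℝ E] [AddCommGroup U] [Module ℝ U]

theorem convex_strictEpigraph {f : E → EReal}
    (hf : ∀ z w : E, ∀ θ : ℝ, 0 ≤ θ → θ ≤ 1 →
      f (θ • z + (1 - θ) • w) ≤ (θ : EReal) * f z + ((1 - θ : ℝ) : EReal) * f w) :
    Convex ℝ (strictEpigraph f) := by
  rintro ⟨z, s⟩ hz ⟨w, t⟩ hw a b ha hb hab
  obtain rfl : b = 1 - a := by linarith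
  obtain ⟨r, hzr, hrs⟩ := EReal.exists_between_coe_real hz
  obtain ⟨r', hwr, hrt⟩ := EReal.exists_between_coe_real hw
  have hrs : r < s := by exact_mod_cast hrs
  have hrt : r' < t := by exact_mod_cast hrt
  show f (a • z + (1 - a) • w) < ((a * s + (1 - a) * t : ℝ) : EReal)
  calc f (a • z + (1 - a) • w)
      ≤ (a : EReal) * f z + ((1 - a : ℝ) : EReal) * f w := hf z w a ha (by linarith)
    _ ≤ (a : EReal) * r + ((1 - a : ℝ) : EReal) * r' := by gcongr
    _ < ((a * s + (1 - a) * t : ℝ) : EReal) := by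
        norm_cast
        rcases ha.lt_or_eq with ha | rfl
        · nlinarith
        · simpa using hrt

theorem convex_strictEpigraph_iInf {F : E × U → EReal} (hF : Convex ℝ (strictEpigraph F)) :
    Convex ℝ (strictEpigraph fun u => ⨅ x, F (x, u)) := by
  have h : (strictEpigraph fun u => ⨅ x, F (x, u)) =
      (LinearMap.snd ℝ E U).prodMap LinearMap.id '' strictEpigraph F := by
    ext ⟨u, t⟩
    simp [strictEpigraph, iInf_lt_iff]
  exact h ▸ hF.linear_image _

end Convexity

section Separation

variable {U : Type*} [AddCommGroup U] [Module ℝ U] [TopologicalSpace U]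
  [IsTopologicalAddGroup U] [ContinuousSMul ℝ U]

theorem exists_affine_minorant_of_le_on_nhds {p : U → EReal}
    (hp : Convex ℝ (strictEpigraph p)) (hp0 : p 0 ≠ ⊤) {s : Set U} (hs : Convex ℝ s)
    (hso : IsOpen s) (hs0 : (0 : U) ∈ s) {τ : ℝ} (hτ : ∀ u ∈ s, (τ : EReal) ≤ p u) :
    ∃ φ : StrongDual ℝ U, ∀ u, ((τ + φ u : ℝ) : EReal) ≤ p u := by
  have hdisj : Disjoint (s ×ˢ Set.Iio τ) (strictEpigraph p) := by
    refine Set.disjoint_left.2 fun ⟨u, t⟩ ⟨hu, ht⟩ hut => ?_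
    exact (hτ u hu).not_gt (hut.trans (by exact_mod_cast ht))
  obtain ⟨f, α, hA, hB⟩ :=
    geometric_hahn_banach_open (hs.prod (convex_Iio τ)) (hso.prod isOpen_Iio) hp hdisj
  set g := f.comp (ContinuousLinearMap.inl ℝ U ℝ)
  set β := f (0, 1)
  have hf : ∀ u t, f (u, t) = g u + t * β := fun u t => by
    rw [show (u, t) = (u, 0) + t • ((0 : U), (1 : ℝ)) by simp, map_add, map_smul, smul_eq_mul]
    rfl
  have hbelow : ∀ t < τ, t * β < α := fun t ht => by
    have h := hA (0, t) ⟨hs0, ht⟩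
    rwa [hf, map_zero, zero_add] at h
  have habove : ∀ u, ∀ t : ℝ, p u < t → α ≤ g u + t * β := fun u t h => hf u t ▸ hB (u, t) h
  obtain ⟨r, hr, -⟩ := EReal.exists_between_coe_real hp0.lt_top
  -- `(0, r)` lies in the epigraph and `(0, t)` below it for `t < τ`, so the hyperplane is not vertical.
  have hβ : 0 < β := by
    have h1 := hbelow (min τ r - 1) (by linarith [min_le_left τ r])
    have h2 := habove 0 r hr
    simp only [map_zero, zero_add] at h2
    nlinarith [min_le_right τ r]
  have hτα : τ * β ≤ α :=
    (le_div_iff₀ hβ).1 (le_of_forall_lt fun t ht => (lt_div_iff₀ hβ).2 (hbelow t ht))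
  refine ⟨-β⁻¹ • g, fun u => EReal.le_of_forall_lt_iff_le.1 fun t ht => ?_⟩
  have hut := habove u t ht
  have hmul : (τ - β⁻¹ * g u) * β ≤ t * β := by
    rw [sub_mul, mul_comm β⁻¹, mul_assoc, inv_mul_cancel₀ hβ.ne']
    linarith
  simp only [smul_apply, smul_eq_mul, neg_mul, ← sub_eq_add_neg]
  exact_mod_cast le_of_mul_le_mul_right hmul hβ

end Separation

theorem sInf_norm_eq_zero_iff {U : Type*} [SeminormedAddCommGroup U] (P : U → Prop) :
    sInf {y : EReal | ∃ u, P u ∧ y = (‖u‖ : EReal)} = 0 ↔ ∀ ε > 0, ∃ u, P u ∧ ‖u‖ < ε := by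
  constructor
  · intro h ε hε
    obtain ⟨_, ⟨u, hu, rfl⟩, hlt⟩ := sInf_lt_iff.1 (h ▸ (EReal.coe_pos.2 hε))
    exact ⟨u, hu, by exact_mod_cast hlt⟩
  · intro h
    refine le_antisymm (EReal.le_of_forall_lt_iff_le.1 fun z hz => ?_) ?_
    · obtain ⟨u, hu, hlt⟩ := h z (by exact_mod_cast hz)
      have hmem : (‖u‖ : EReal) ∈ {y : EReal | ∃ u, P u ∧ y = (‖u‖ : EReal)} := ⟨u, hu, rfl⟩
      exact (sInf_le hmem).trans (by exact_mod_cast hlt.le)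
    · exact le_sInf fun _ ⟨u, _, hy⟩ => hy ▸ EReal.coe_nonneg.2 (norm_nonneg u)

section InnerProductSpace

variable {U : Type*} [NormedAddCommGroup U] [InnerProductSpace ℝ U]

theorem iInf_sub_inner_le_of_forall_norm_lt {p : U → EReal} {τ : ℝ}
    (h : ∀ ε > 0, ∃ u, p u ≤ τ ∧ ‖u‖ < ε) (μ : U) :
    ⨅ u, (p u - ((⟪μ, u⟫ : ℝ) : EReal)) ≤ τ := by
  refine EReal.le_of_forall_lt_iff_le.1 fun z hz => ?_
  have hz : τ < z := by exact_mod_cast hz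
  obtain ⟨u, hpu, hu⟩ := h ((z - τ) / (‖μ‖ + 1)) (div_pos (sub_pos.2 hz) (by positivity))
  have hinner : τ - ⟪μ, u⟫ ≤ z :=
    calc τ - ⟪μ, u⟫ ≤ τ + ‖μ‖ * ‖u‖ := by
          linarith [neg_abs_le ⟪μ, u⟫, abs_real_inner_le_norm μ u]
      _ ≤ τ + (‖μ‖ + 1) * ((z - τ) / (‖μ‖ + 1)) := by gcongr; linarith
      _ = z := by field_simp; ring
  calc ⨅ u, (p u - ((⟪μ, u⟫ : ℝ) : EReal)) ≤ p u - ((⟪μ, u⟫ : ℝ) : EReal) := iInf_le _ u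
    _ ≤ ((τ - ⟪μ, u⟫ : ℝ) : EReal) := by rw [EReal.coe_sub]; exact EReal.sub_le_sub hpu le_rfl
    _ ≤ z := by exact_mod_cast hinner

theorem le_iSup_iInf_sub_inner [CompleteSpace U] {p : U → EReal}
    (hp : Convex ℝ (strictEpigraph p)) (hp0 : p 0 ≠ ⊤) {τ ε : ℝ} (hε : 0 < ε)
    (hball : ∀ u, ‖u‖ < ε → (τ : EReal) ≤ p u) :
    (τ : EReal) ≤ ⨆ μ, ⨅ u, (p u - ((⟪μ, u⟫ : ℝ) : EReal)) := by
  obtain ⟨φ, hφ⟩ := exists_affine_minorant_of_le_on_nhds hp hp0 (convex_ball 0 ε)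
    Metric.isOpen_ball (Metric.mem_ball_self hε) fun u hu => hball u (mem_ball_zero_iff.1 hu)
  refine le_iSup_of_le ((InnerProductSpace.toDual ℝ U).symm φ) (le_iInf fun u => ?_)
  rw [InnerProductSpace.toDual_symm_apply, EReal.le_sub_iff_add_le (.inl (EReal.coe_ne_bot _))
    (.inl (EReal.coe_ne_top _))]
  exact_mod_cast hφ u

end InnerProductSpace

theorem value_function_root_duality_general_general {n m : ℕ}
    (F : EuclideanSpace ℝ (Fin n) × EuclideanSpace ℝ (Fin m) → EReal)
    (hFconvex : ∀ z w : EuclideanSpace ℝ (Fin n) × EuclideanSpace ℝ (Fin m),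
      ∀ θ : ℝ, 0 ≤ θ → θ ≤ 1 →
        F (θ • z + (1 - θ) • w) ≤ (θ : EReal) * F z + ((1 - θ : ℝ) : EReal) * F w)
    (p : EuclideanSpace ℝ (Fin m) → EReal)
    (hp : ∀ u, p u = ⨅ x : EuclideanSpace ℝ (Fin n), F (x, u))
    (hp0fin : p 0 ≠ ⊤ ∧ p 0 ≠ ⊥)
    (τd : EReal)
    (hτd : τd = ⨆ μ : EuclideanSpace ℝ (Fin m),
      ⨅ u : EuclideanSpace ℝ (Fin m), (p u - ((⟪μ, u⟫ : ℝ) : EReal)))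
    (v : ℝ → EReal)
    (hv : ∀ τ : ℝ, v τ = sInf {y : EReal |
      ∃ u : EuclideanSpace ℝ (Fin m),
        (∃ x : EuclideanSpace ℝ (Fin n), F (x, u) ≤ (τ : EReal)) ∧ y = (‖u‖ : EReal)}) :
    τd = sInf {t : EReal | ∃ τ : ℝ, t = (τ : EReal) ∧ v τ = 0} ∧
      ∀ τ : ℝ, τd < (τ : EReal) → v τ = 0 := by
  have hroot : ∀ τ : ℝ, v τ = 0 ↔ ∀ ε > 0, ∃ u, (∃ x, F (x, u) ≤ τ) ∧ ‖u‖ < ε :=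
    fun τ => hv τ ▸ sInf_norm_eq_zero_iff _
  have hepi : Convex ℝ (strictEpigraph p) := by
    simpa only [← hp] using convex_strictEpigraph_iInf (convex_strictEpigraph hFconvex)
  have hsuper : ∀ τ : ℝ, τd < τ → v τ = 0 := by
    intro τ hτ
    by_contra hv0
    obtain ⟨ε, hε, hfar⟩ : ∃ ε > 0, ∀ u x, F (x, u) ≤ τ → ε ≤ ‖u‖ := by
      simpa [hroot] using hv0
    refine hτ.not_ge (hτd ▸ le_iSup_iInf_sub_inner hepi hp0fin.1 hε fun u hu => ?_)
    exact (hp u).symm ▸ le_iInf fun x => (not_le.1 fun hx => (hfar u x hx).not_gt hu).le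
  refine ⟨le_antisymm (le_sInf ?_) (EReal.le_of_forall_lt_iff_le.1 fun τ hτ =>
    sInf_le ⟨τ, rfl, hsuper τ hτ⟩), hsuper⟩
  rintro _ ⟨τ, rfl, hvτ⟩
  refine hτd ▸ iSup_le (iInf_sub_inner_le_of_forall_norm_lt fun ε hε => ?_)
  obtain ⟨u, ⟨x, hx⟩, hu⟩ := (hroot τ).1 hvτ ε hε
  exact ⟨u, (hp u ▸ iInf_le _ x).trans hx, hu⟩

/-- **Duality of the value function root (general perturbation framework).**
Let `F : ℝⁿ × ℝᵐ → ℝ ∪ {+∞}` be a proper convex function (never `-∞`, somewhere finite),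
`p(u) := inf_x F(x, u)` the perturbation function with `p(0)` finite, and
`τd := p**(0) = sup_μ inf_u (p(u) - ⟨μ, u⟩)` the dual value.  With the generalized
level-set value function `v(τ) := inf {‖u‖ : ∃ x, F(x, u) ≤ τ}` one has
`τd = inf {τ ∈ ℝ : v(τ) = 0}` and `v(τ) = 0` for every `τ > τd`. -/
theorem value_function_root_duality_general {n m : ℕ}
    (F : EuclideanSpace ℝ (Fin n) × EuclideanSpace ℝ (Fin m) → EReal)
    (hFbot : ∀ z, F z ≠ ⊥)
    (hFproper : ∃ z, F z ≠ ⊤)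
    (hFconvex : ∀ z w : EuclideanSpace ℝ (Fin n) × EuclideanSpace ℝ (Fin m),
      ∀ θ : ℝ, 0 ≤ θ → θ ≤ 1 →
        F (θ • z + (1 - θ) • w) ≤ (θ : EReal) * F z + ((1 - θ : ℝ) : EReal) * F w)
    (p : EuclideanSpace ℝ (Fin m) → EReal)
    (hp : ∀ u, p u = ⨅ x : EuclideanSpace ℝ (Fin n), F (x, u))
    (hp0fin : p 0 ≠ ⊤ ∧ p 0 ≠ ⊥)
    (τd : EReal)
    (hτd : τd = ⨆ μ : EuclideanSpace ℝ (Fin m),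
      ⨅ u : EuclideanSpace ℝ (Fin m), (p u - ((⟪μ, u⟫ : ℝ) : EReal)))
    (v : ℝ → EReal)
    (hv : ∀ τ : ℝ, v τ = sInf {y : EReal |
      ∃ u : EuclideanSpace ℝ (Fin m),
        (∃ x : EuclideanSpace ℝ (Fin n), F (x, u) ≤ (τ : EReal)) ∧ y = (‖u‖ : EReal)}) :
    τd = sInf {t : EReal | ∃ τ : ℝ, t = (τ : EReal) ∧ v τ = 0} ∧
      ∀ τ : ℝ, τd < (τ : EReal) → v τ = 0 :=
  value_function_root_duality_general_general F hFconvex p hp hp0fin τd hτd v hv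
end

section
/- Let τ_d := sup_{λ ≤ 0} inf_{x ∈ 𝒳} (f(x) − λ·g(x)) and suppose strong duality fails, i.e. τ_d < τ_p. Then v(τ) = 0 for every τ with τ_d < τ < τ_p; in particular inf{τ ∈ ℝ : v(τ) = 0} = τ_d < τ_p, so the leftmost root of the level-set value function is strictly smaller than the primal optimal value. -/
/-!
No feasible point has `f < τ_p`, so `v ≥ 0` below `τ_p`. If `v(τ) ≥ ε > 0`, the convex set
`{(a, b) | ∃ x ∈ 𝒳, f x ≤ a ∧ g x ≤ b}` misses the open quadrant `(-∞, τ) × (-∞, ε)`; a separating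
line has a normal `(α, β) ≥ 0`, and `α > 0` because some point is feasible. The multiplier
`μ = β / α` then gives `f + μ g ≥ τ + μ ε` on `𝒳`, hence `τ ≤ τ_d`. So `v` vanishes on `(τ_d, τ_p)`,
while weak duality makes `v` positive below `τ_d`; the leftmost root is therefore `τ_d`.
-/

open Set

lemma nonneg_of_forall_sub_mul_lt {a c u : ℝ} (h : ∀ t : ℝ, 0 ≤ t → c - t * a < u) : 0 ≤ a := by
  by_contra! ha
  have ht : |u - c| / -a * a = -|u - c| := by field_simp [ha.ne]
  have := h (|u - c| / -a) (div_nonneg (abs_nonneg _) (by linarith))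
  linarith [le_abs_self (u - c)]

lemma ContinuousLinearMap.apply_prod_real (φ : ℝ × ℝ →L[ℝ] ℝ) (p : ℝ × ℝ) :
    φ p = φ (1, 0) * p.1 + φ (0, 1) * p.2 := by
  calc φ p = φ (p.1 • (1, 0) + p.2 • (0, 1)) := by congr 1; ext <;> simp
    _ = φ (1, 0) * p.1 + φ (0, 1) * p.2 := by
      rw [map_add, map_smul, map_smul, smul_eq_mul, smul_eq_mul, mul_comm, mul_comm p.2]

lemma exists_nonneg_separation_of_disjoint_Iio_prod {S : Set (ℝ × ℝ)} (hS : Convex ℝ S)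
    (hne : S.Nonempty) {τ ε : ℝ} (hdisj : Disjoint (Iio τ ×ˢ Iio ε) S) :
    ∃ α β : ℝ, 0 ≤ α ∧ 0 ≤ β ∧ 0 < α + β ∧ ∀ p ∈ S, α * τ + β * ε ≤ α * p.1 + β * p.2 := by
  obtain ⟨φ, u, hC, hSu⟩ := geometric_hahn_banach_open ((convex_Iio τ).prod (convex_Iio ε))
    (isOpen_Iio.prod isOpen_Iio) hS hdisj
  have hφ := φ.apply_prod_real
  set α := φ (1, 0)
  set β := φ (0, 1)
  have hCu : ∀ a < τ, ∀ b < ε, α * a + β * b < u := fun a ha b hb => by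
    linarith [hC (a, b) ⟨ha, hb⟩, hφ (a, b)]
  have hα : 0 ≤ α :=
    nonneg_of_forall_sub_mul_lt (c := α * (τ - 1) + β * (ε - 1)) (u := u) fun t ht => by
      linarith [hCu (τ - 1 - t) (by linarith) (ε - 1) (by linarith)]
  have hβ : 0 ≤ β :=
    nonneg_of_forall_sub_mul_lt (c := α * (τ - 1) + β * (ε - 1)) (u := u) fun t ht => by
      linarith [hCu (τ - 1) (by linarith) (ε - 1 - t) (by linarith)]
  have hτε : φ (τ, ε) ≤ u := by
    have hmem : (τ, ε) ∈ closure (Iio τ ×ˢ Iio ε) := by simp [closure_prod_eq]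
    exact closure_minimal (fun p hp => (hC p hp).le) (isClosed_le φ.continuous continuous_const)
      hmem
  obtain ⟨p₀, hp₀⟩ := hne
  have hpos : 0 < α + β := by
    by_contra! h
    have hφ0 : ∀ p, φ p = 0 := fun p => by
      rw [hφ, show α = 0 by linarith, show β = 0 by linarith]; ring
    linarith [hSu p₀ hp₀, hC (τ - 1, ε - 1) ⟨by simp, by simp⟩, hφ0 p₀, hφ0 (τ - 1, ε - 1)]
  refine ⟨α, β, hα, hβ, hpos, fun p hp => ?_⟩
  have := hSu p hp
  linarith [hφ (τ, ε), hφ p]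

section Multiplier

variable {E : Type*} [AddCommMonoid E] [Module ℝ E] {s : Set E} {f g : E → ℝ}

lemma ConvexOn.convex_setOf_exists_le_le (hf : ConvexOn ℝ s f) (hg : ConvexOn ℝ s g) :
    Convex ℝ {p : ℝ × ℝ | ∃ x ∈ s, f x ≤ p.1 ∧ g x ≤ p.2} := by
  rintro p ⟨x, hx, hfx, hgx⟩ q ⟨y, hy, hfy, hgy⟩ a b ha hb hab
  refine ⟨a • x + b • y, hf.1 hx hy ha hb hab, ?_, ?_⟩
  · calc f (a • x + b • y) ≤ a * f x + b * f y := hf.2 hx hy ha hb hab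
      _ ≤ a * p.1 + b * q.1 := by gcongr
      _ = (a • p + b • q).1 := by simp
  · calc g (a • x + b • y) ≤ a * g x + b * g y := hg.2 hx hy ha hb hab
      _ ≤ a * p.2 + b * q.2 := by gcongr
      _ = (a • p + b • q).2 := by simp

lemma exists_multiplier_of_forall_le_imp_le (hf : ConvexOn ℝ s f) (hg : ConvexOn ℝ s g)
    {x₀ : E} (hx₀ : x₀ ∈ s) (hgx₀ : g x₀ ≤ 0) {τ ε : ℝ} (hε : 0 < ε)
    (hgap : ∀ x ∈ s, f x ≤ τ → ε ≤ g x) :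
    ∃ μ : ℝ, 0 ≤ μ ∧ ∀ x ∈ s, τ + μ * ε ≤ f x + μ * g x := by
  have hdisj : Disjoint (Iio τ ×ˢ Iio ε) {p : ℝ × ℝ | ∃ x ∈ s, f x ≤ p.1 ∧ g x ≤ p.2} := by
    rw [Set.disjoint_left]
    rintro p ⟨hp₁, hp₂⟩ ⟨x, hx, hfx, hgx⟩
    linarith [hgap x hx (by linarith [mem_Iio.1 hp₁]), mem_Iio.1 hp₂]
  obtain ⟨α, β, hα, hβ, hαβ, hsep⟩ := exists_nonneg_separation_of_disjoint_Iio_prod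
    (hf.convex_setOf_exists_le_le hg) ⟨(f x₀, g x₀), x₀, hx₀, le_rfl, le_rfl⟩ hdisj
  have hsep' : ∀ x ∈ s, α * τ + β * ε ≤ α * f x + β * g x := fun x hx =>
    hsep (f x, g x) ⟨x, hx, le_rfl, le_rfl⟩
  have hαpos : 0 < α := by
    refine hα.lt_of_ne fun hα0 => ?_
    have := hsep' x₀ hx₀
    rw [← hα0] at this
    nlinarith
  refine ⟨β / α, div_nonneg hβ hα, fun x hx => ?_⟩
  have key : α * (τ + β / α * ε) ≤ α * (f x + β / α * g x) := by
    field_simp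
    linarith [hsep' x hx]
  exact le_of_mul_le_mul_left key hαpos

end Multiplier

section ValueFunctions

variable {E : Type*} (s : Set E) (f g : E → ℝ)

-- `primalValue`, `dualValue` and `levelValue` are the paper's `τ_p`, `τ_d` and `v`.
noncomputable def primalValue : EReal := sInf {y : EReal | ∃ x ∈ s, g x ≤ 0 ∧ y = (f x : EReal)}

noncomputable def dualValue : EReal :=
  ⨆ (lam : ℝ) (_ : lam ≤ 0), ⨅ x ∈ s, ((f x - lam * g x : ℝ) : EReal)

noncomputable def levelValue (τ : ℝ) : EReal :=
  sInf {y : EReal | ∃ x ∈ s, f x ≤ τ ∧ y = (g x : EReal)}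

variable {s f g}

lemma exists_feasible_of_primalValue_ne_top (h : primalValue s f g ≠ ⊤) :
    ∃ x ∈ s, g x ≤ 0 := by
  by_contra! hne
  refine h (sInf_eq_top.2 ?_)
  rintro _ ⟨x, hx, hgx, rfl⟩
  exact absurd hgx (hne x hx).not_ge

lemma levelValue_pos_iff {τ : ℝ} :
    0 < levelValue s f g τ ↔ ∃ ε : ℝ, 0 < ε ∧ ∀ x ∈ s, f x ≤ τ → ε ≤ g x := by
  constructor
  · intro h
    obtain ⟨ε, hε₀, hε⟩ := EReal.exists_between_coe_real h
    exact ⟨ε, EReal.coe_pos.1 hε₀, fun x hx hfx =>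
      EReal.coe_le_coe_iff.1 (hε.le.trans (sInf_le ⟨x, hx, hfx, rfl⟩))⟩
  · rintro ⟨ε, hε₀, hε⟩
    refine (EReal.coe_pos.2 hε₀).trans_le (le_sInf ?_)
    rintro _ ⟨x, hx, hfx, rfl⟩
    exact EReal.coe_le_coe_iff.2 (hε x hx hfx)

lemma levelValue_nonneg_of_lt_primalValue {τ : ℝ} (h : (τ : EReal) < primalValue s f g) :
    0 ≤ levelValue s f g τ := by
  refine le_sInf ?_
  rintro _ ⟨x, hx, hfx, rfl⟩
  by_contra! hgx
  have : primalValue s f g ≤ f x := sInf_le ⟨x, hx, EReal.coe_neg'.1 hgx |>.le, rfl⟩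
  exact (h.trans_le this).not_ge (EReal.coe_le_coe_iff.2 hfx)

lemma levelValue_pos_of_lt_dualValue {τ : ℝ} (h : (τ : EReal) < dualValue s f g) :
    0 < levelValue s f g τ := by
  obtain ⟨τ₁, hτ₁, hτ₁d⟩ := EReal.exists_between_coe_real h
  simp only [dualValue, lt_iSup_iff] at hτ₁d
  obtain ⟨lam, hlam, hτ₁L⟩ := hτ₁d
  have hL : ∀ x ∈ s, τ₁ < f x - lam * g x := fun x hx =>
    EReal.coe_lt_coe_iff.1 (hτ₁L.trans_le (iInf₂_le x hx))
  have hττ₁ : τ < τ₁ := EReal.coe_lt_coe_iff.1 hτ₁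
  refine levelValue_pos_iff.2 ?_
  rcases hlam.lt_or_eq with hlam | rfl
  · refine ⟨(τ₁ - τ) / -lam, div_pos (by linarith) (by linarith), fun x hx hfx => ?_⟩
    rw [div_le_iff₀ (by linarith)]
    linarith [hL x hx]
  · exact ⟨1, one_pos, fun x hx hfx => absurd (hL x hx) (by simp; linarith)⟩

lemma le_dualValue_of_levelValue_pos [AddCommMonoid E] [Module ℝ E] (hf : ConvexOn ℝ s f)
    (hg : ConvexOn ℝ s g) (hfeas : ∃ x ∈ s, g x ≤ 0) {τ : ℝ} (h : 0 < levelValue s f g τ) :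
    (τ : EReal) ≤ dualValue s f g := by
  obtain ⟨x₀, hx₀, hgx₀⟩ := hfeas
  obtain ⟨ε, hε, hgap⟩ := levelValue_pos_iff.1 h
  obtain ⟨μ, hμ, hμL⟩ := exists_multiplier_of_forall_le_imp_le hf hg hx₀ hgx₀ hε hgap
  calc (τ : EReal) ≤ (τ + μ * ε : ℝ) := EReal.coe_le_coe_iff.2 (by nlinarith)
    _ ≤ ⨅ x ∈ s, ((f x - -μ * g x : ℝ) : EReal) := le_iInf₂ fun x hx =>
      EReal.coe_le_coe_iff.2 (by linarith [hμL x hx])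
    _ ≤ dualValue s f g := le_iSup₂_of_le (-μ) (by linarith) le_rfl

end ValueFunctions

theorem spurious_root_without_strong_duality_general {n : ℕ}
    (𝒳 : Set (EuclideanSpace ℝ (Fin n))) (hXcvx : Convex ℝ 𝒳)
    (f g : EuclideanSpace ℝ (Fin n) → ℝ)
    (hf : ConvexOn ℝ Set.univ f)
    (hg : ConvexOn ℝ Set.univ g)
    (τp : ℝ)
    (hτp : (τp : EReal) = sInf {y : EReal | ∃ x ∈ 𝒳, g x ≤ 0 ∧ y = (f x : EReal)})
    (v : ℝ → EReal)
    (hv : ∀ τ : ℝ, v τ = sInf {y : EReal | ∃ x ∈ 𝒳, f x ≤ τ ∧ y = (g x : EReal)})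
    (τd : EReal)
    (hτd : τd = ⨆ (lam : ℝ) (_ : lam ≤ 0), ⨅ x ∈ 𝒳, ((f x - lam * g x : ℝ) : EReal))
    (hgap : τd < (τp : EReal)) :
    (∀ τ : ℝ, τd < (τ : EReal) → τ < τp → v τ = 0) ∧
      sInf {t : EReal | ∃ τ : ℝ, t = (τ : EReal) ∧ v τ = 0} = τd ∧
      τd < (τp : EReal) := by
  obtain rfl : v = levelValue 𝒳 f g := funext hv
  obtain rfl : τd = dualValue 𝒳 f g := hτd
  change (τp : EReal) = primalValue 𝒳 f g at hτp
  have hfeas := exists_feasible_of_primalValue_ne_top (hτp ▸ EReal.coe_ne_top τp)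
  have hf𝒳 := hf.subset (subset_univ 𝒳) hXcvx
  have hg𝒳 := hg.subset (subset_univ 𝒳) hXcvx
  have hroot : ∀ τ : ℝ, dualValue 𝒳 f g < τ → τ < τp → levelValue 𝒳 f g τ = 0 :=
    fun τ hdτ hτp' => le_antisymm
      (not_lt.1 fun hpos => (le_dualValue_of_levelValue_pos hf𝒳 hg𝒳 hfeas hpos).not_gt hdτ)
      (levelValue_nonneg_of_lt_primalValue (hτp ▸ EReal.coe_lt_coe_iff.2 hτp'))
  refine ⟨hroot, le_antisymm ?_ ?_, hgap⟩
  · refine le_of_forall_gt_imp_ge_of_dense fun t ht => ?_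
    obtain ⟨τ, hdτ, hτ⟩ := EReal.exists_between_coe_real (lt_min ht hgap)
    have hroot_τ := hroot τ hdτ (EReal.coe_lt_coe_iff.1 (hτ.trans_le (min_le_right _ _)))
    exact (sInf_le (show (τ : EReal) ∈ {t : EReal | ∃ τ : ℝ, t = τ ∧ levelValue 𝒳 f g τ = 0}
      from ⟨τ, rfl, hroot_τ⟩)).trans (hτ.le.trans (min_le_left _ _))
  · refine le_sInf ?_
    rintro _ ⟨τ, rfl, hτ⟩
    exact not_lt.1 fun h => (levelValue_pos_of_lt_dualValue h).ne' hτ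

/-- **Failure of strong duality implies a spurious leftmost root.**
With `𝒳 ⊆ ℝⁿ` nonempty convex, `f, g` convex lsc, primal value
`τp = inf {f(x) : x ∈ 𝒳, g(x) ≤ 0}` finite (represented by the real number `τp`),
`τd = sup_{λ ≤ 0} inf_{x ∈ 𝒳} (f(x) - λ g(x))` the Lagrangian dual value, and
`v(τ) = inf {g(x) : x ∈ 𝒳, f(x) ≤ τ}` the level-set value function: if strong duality
fails, i.e. `τd < τp`, then `v(τ) = 0` for every `τd < τ < τp`; in particular
`inf {τ : v(τ) = 0} = τd < τp`. -/
theorem spurious_root_without_strong_duality {n : ℕ}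
    (𝒳 : Set (EuclideanSpace ℝ (Fin n))) (hXne : 𝒳.Nonempty) (hXcvx : Convex ℝ 𝒳)
    (f g : EuclideanSpace ℝ (Fin n) → ℝ)
    (hf : ConvexOn ℝ Set.univ f) (hflsc : LowerSemicontinuous f)
    (hg : ConvexOn ℝ Set.univ g) (hglsc : LowerSemicontinuous g)
    (τp : ℝ)
    (hτp : (τp : EReal) = sInf {y : EReal | ∃ x ∈ 𝒳, g x ≤ 0 ∧ y = (f x : EReal)})
    (v : ℝ → EReal)
    (hv : ∀ τ : ℝ, v τ = sInf {y : EReal | ∃ x ∈ 𝒳, f x ≤ τ ∧ y = (g x : EReal)})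
    (τd : EReal)
    (hτd : τd = ⨆ (lam : ℝ) (_ : lam ≤ 0), ⨅ x ∈ 𝒳, ((f x - lam * g x : ℝ) : EReal))
    (hgap : τd < (τp : EReal)) :
    (∀ τ : ℝ, τd < (τ : EReal) → τ < τp → v τ = 0) ∧
      sInf {t : EReal | ∃ τ : ℝ, t = (τ : EReal) ∧ v τ = 0} = τd ∧
      τd < (τp : EReal) :=
  spurious_root_without_strong_duality_general 𝒳 hXcvx f g hf hg τp hτp v hv τd hτd hgap
end

section
/- Suppose τ ∈ 𝒮, i.e. the set argmin v(τ) := {x ∈ 𝒳 : f(x) ≤ τ, g(x) = v(τ)} is nonempty and every x ∈ argmin v(τ) satisfies f(x) = τ. Then p(v(τ)) = τ. -/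
/-- **Value-function inverse relation (part a).**
Let `𝒳 ⊆ ℝⁿ` be nonempty, `f, g : ℝⁿ → ℝ` arbitrary, and define the flipped value
functions `p(u) = inf {f(x) : x ∈ 𝒳, g(x) ≤ u}` and `v(τ) = inf {g(x) : x ∈ 𝒳, f(x) ≤ τ}`
(with `inf ∅ = +∞`, values in the extended reals).  If `τ ∈ 𝒮`, i.e. the set
`argmin v(τ) = {x ∈ 𝒳 : f(x) ≤ τ, g(x) = v(τ)}` is nonempty and each of its members
satisfies `f(x) = τ`, then `p(v(τ)) = τ`. -/
theorem value_function_inverse {n : ℕ}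
    (𝒳 : Set (EuclideanSpace ℝ (Fin n))) (hXne : 𝒳.Nonempty)
    (f g : EuclideanSpace ℝ (Fin n) → ℝ)
    (p : EReal → EReal)
    (hp : ∀ u : EReal, p u = sInf {y : EReal | ∃ x ∈ 𝒳, (g x : EReal) ≤ u ∧ y = (f x : EReal)})
    (v : ℝ → EReal)
    (hv : ∀ τ : ℝ, v τ = sInf {y : EReal | ∃ x ∈ 𝒳, f x ≤ τ ∧ y = (g x : EReal)})
    (τ : ℝ)
    (hne : ∃ x ∈ 𝒳, f x ≤ τ ∧ (g x : EReal) = v τ)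
    (hactive : ∀ x ∈ 𝒳, f x ≤ τ → (g x : EReal) = v τ → f x = τ) :
    p (v τ) = (τ : EReal) := by
  obtain ⟨x₀, hx₀X, hx₀f, hx₀g⟩ := hne
  have hfx₀ : f x₀ = τ := hactive x₀ hx₀X hx₀f hx₀g
  rw [hp]
  apply le_antisymm
  · apply sInf_le
    exact ⟨x₀, hx₀X, le_of_eq hx₀g, by rw [hfx₀]⟩
  · apply le_sInf
    rintro y ⟨x, hxX, hgx, rfl⟩
    by_cases hfx : f x ≤ τ
    · have hv_le : v τ ≤ (g x : EReal) := by
        rw [hv]; exact sInf_le ⟨x, hxX, hfx, rfl⟩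
      have heq : (g x : EReal) = v τ := le_antisymm hgx hv_le
      have := hactive x hxX hfx heq
      exact le_of_eq (by exact_mod_cast this.symm)
    · push_neg at hfx
      exact_mod_cast le_of_lt hfx
end

section
/- Suppose τ ∈ 𝒮, i.e. the set argmin v(τ) := {x ∈ 𝒳 : f(x) ≤ τ, g(x) = v(τ)} is nonempty and every x ∈ argmin v(τ) satisfies f(x) = τ. Then argmin v(τ) = argmin p(v(τ)), where argmin p(u) := {x ∈ 𝒳 : g(x) ≤ u, f(x) = p(u)}; in particular every x ∈ argmin v(τ) satisfies g(x) = v(τ) and f(x) = p(v(τ)) = τ. -/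
/-- **Value-function inverse relation (part b: solution sets coincide).**
Let `𝒳 ⊆ ℝⁿ` be nonempty, `f, g : ℝⁿ → ℝ` arbitrary, and define the flipped value
functions `p(u) = inf {f(x) : x ∈ 𝒳, g(x) ≤ u}` and `v(τ) = inf {g(x) : x ∈ 𝒳, f(x) ≤ τ}`
(with `inf ∅ = +∞`).  Suppose `τ ∈ 𝒮`, i.e. `argmin v(τ) = {x ∈ 𝒳 : f(x) ≤ τ, g(x) = v(τ)}`
is nonempty and each of its members satisfies `f(x) = τ`.  Then
`argmin v(τ) = argmin p(v(τ))`, where `argmin p(u) = {x ∈ 𝒳 : g(x) ≤ u, f(x) = p(u)}`;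
in particular each `x ∈ argmin v(τ)` satisfies `g(x) = v(τ)` and `f(x) = p(v(τ)) = τ`. -/
theorem value_function_argmin_inverse {n : ℕ}
    (𝒳 : Set (EuclideanSpace ℝ (Fin n))) (hXne : 𝒳.Nonempty)
    (f g : EuclideanSpace ℝ (Fin n) → ℝ)
    (p : EReal → EReal)
    (hp : ∀ u : EReal, p u = sInf {y : EReal | ∃ x ∈ 𝒳, (g x : EReal) ≤ u ∧ y = (f x : EReal)})
    (v : ℝ → EReal)
    (hv : ∀ τ : ℝ, v τ = sInf {y : EReal | ∃ x ∈ 𝒳, f x ≤ τ ∧ y = (g x : EReal)})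
    (τ : ℝ)
    (hne : ∃ x ∈ 𝒳, f x ≤ τ ∧ (g x : EReal) = v τ)
    (hactive : ∀ x ∈ 𝒳, f x ≤ τ → (g x : EReal) = v τ → f x = τ) :
    {x | x ∈ 𝒳 ∧ f x ≤ τ ∧ (g x : EReal) = v τ} =
        {x | x ∈ 𝒳 ∧ (g x : EReal) ≤ v τ ∧ (f x : EReal) = p (v τ)} ∧
      ∀ x ∈ 𝒳, f x ≤ τ → (g x : EReal) = v τ →
        (g x : EReal) = v τ ∧ (f x : EReal) = p (v τ) ∧ p (v τ) = (τ : EReal) := by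
  obtain ⟨x₀, hx₀X, hx₀f, hx₀g⟩ := hne
  -- v τ is a lower bound on g over the feasible set
  have hlb : ∀ x ∈ 𝒳, f x ≤ τ → v τ ≤ (g x : EReal) := by
    intro x hx hfx
    rw [hv τ]
    exact sInf_le ⟨x, hx, hfx, rfl⟩
  have hfx₀ : f x₀ = τ := hactive x₀ hx₀X hx₀f hx₀g
  -- p (v τ) = τ
  have hpτ : p (v τ) = (τ : EReal) := by
    rw [hp (v τ)]
    apply le_antisymm
    · calc sInf {y : EReal | ∃ x ∈ 𝒳, (g x : EReal) ≤ v τ ∧ y = (f x : EReal)}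
          ≤ (f x₀ : EReal) := sInf_le ⟨x₀, hx₀X, le_of_eq hx₀g, rfl⟩
        _ = (τ : EReal) := by rw [hfx₀]
    · apply le_sInf
      rintro y ⟨x, hx, hgx, rfl⟩
      by_cases h : f x ≤ τ
      · have h1 : (g x : EReal) = v τ := le_antisymm hgx (hlb x hx h)
        have := hactive x hx h h1
        exact le_of_eq (by exact_mod_cast this.symm)
      · exact_mod_cast le_of_not_ge h
  refine ⟨?_, fun x hx hfx hgx => ⟨hgx, ?_, hpτ⟩⟩
  · ext x
    simp only [Set.mem_setOf_eq]
    constructor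
    · rintro ⟨hx, hfx, hgx⟩
      refine ⟨hx, le_of_eq hgx, ?_⟩
      rw [hpτ]
      exact_mod_cast hactive x hx hfx hgx
    · rintro ⟨hx, hgx, hfx⟩
      rw [hpτ] at hfx
      have hfx' : f x = τ := by exact_mod_cast hfx
      have hgx' : (g x : EReal) = v τ := le_antisymm hgx (hlb x hx hfx'.le)
      exact ⟨hx, hfx'.le, hgx'⟩
  · rw [hpτ]; exact_mod_cast hactive x hx hfx hgx
end

section
/- Let 𝒳 ⊆ ℝⁿ be a nonempty closed convex set, f, g : ℝⁿ → ℝ convex continuous functions, and assume f is coercive (f(x) → +∞ as ‖x‖ → ∞) and the primal value τ_p := inf{f(x) : x ∈ 𝒳, g(x) ≤ 0} is finite. Then strong duality holds: τ_p = sup_{λ ≤ 0} inf_{x ∈ 𝒳} (f(x) − λ·g(x)). -/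
/-- **Strong duality under coercivity of the objective.**
Let `𝒳 ⊆ ℝⁿ` be nonempty closed convex, `f, g` convex continuous, `f` coercive
(`f(x) → +∞` as `‖x‖ → ∞`), and let the primal value
`τp = inf {f(x) : x ∈ 𝒳, g(x) ≤ 0}` be finite (represented by the real `τp`).  Then
strong duality holds: `τp = sup_{λ ≤ 0} inf_{x ∈ 𝒳} (f(x) - λ g(x))`. -/
theorem strong_duality_of_coercive {n : ℕ}
    (𝒳 : Set (EuclideanSpace ℝ (Fin n))) (hXne : 𝒳.Nonempty)
    (hXclosed : IsClosed 𝒳) (hXcvx : Convex ℝ 𝒳)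
    (f g : EuclideanSpace ℝ (Fin n) → ℝ)
    (hf : ConvexOn ℝ Set.univ f) (hfc : Continuous f)
    (hg : ConvexOn ℝ Set.univ g) (hgc : Continuous g)
    (hcoercive : ∀ M : ℝ, ∃ R : ℝ, ∀ x : EuclideanSpace ℝ (Fin n), R ≤ ‖x‖ → M ≤ f x)
    (τp : ℝ)
    (hτp : (τp : EReal) = sInf {y : EReal | ∃ x ∈ 𝒳, g x ≤ 0 ∧ y = (f x : EReal)}) :
    (τp : EReal) =
      ⨆ (lam : ℝ) (_ : lam ≤ 0), ⨅ x ∈ 𝒳, ((f x - lam * g x : ℝ) : EReal) := by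
  -- the feasible set is nonempty
  have hSne : {y : EReal | ∃ x ∈ 𝒳, g x ≤ 0 ∧ y = (f x : EReal)}.Nonempty := by
    by_contra h
    rw [Set.not_nonempty_iff_eq_empty] at h
    rw [h, sInf_empty] at hτp
    exact EReal.coe_ne_top τp hτp
  obtain ⟨y₀, x₀, hx₀X, hgx₀, hy₀⟩ := hSne
  have hlb : ∀ x ∈ 𝒳, g x ≤ 0 → τp ≤ f x := by
    intro x hx hgx
    have : (τp : EReal) ≤ (f x : EReal) := hτp ▸ sInf_le ⟨x, hx, hgx, rfl⟩
    exact_mod_cast this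
  apply le_antisymm
  · -- hard direction : τp ≤ dual sup
    by_contra hlt
    push_neg at hlt
    obtain ⟨r, hDr, hrτ'⟩ := EReal.lt_iff_exists_real_btwn.1 hlt
    have hrτ : r < τp := by exact_mod_cast hrτ'
    set ε : ℝ := τp - r with hε
    have hεpos : 0 < ε := by simp [hε]; linarith
    -- Step 1: a positive slack δ below which near-feasible points cannot beat τp - ε/2
    have hδ : ∃ δ : ℝ, 0 < δ ∧ ∀ x ∈ 𝒳, g x ≤ δ → ¬(f x ≤ τp - ε / 2) := by
      by_contra h
      push_neg at h
      obtain ⟨R, hR⟩ := hcoercive τp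
      set C : ℕ → Set (EuclideanSpace ℝ (Fin n)) :=
        fun k => {x | x ∈ 𝒳 ∧ f x ≤ τp - ε / 2 ∧ g x ≤ 1 / (k + 1)} with hC
      have hCsub : ∀ k, C k ⊆ Metric.closedBall 0 (max R 0) := by
        intro k x hx
        rw [Metric.mem_closedBall, dist_zero_right]
        by_contra hnx
        push_neg at hnx
        have := hR x (le_trans (le_max_left _ _) hnx.le)
        linarith [hx.2.1]
      have hCcl : ∀ k, IsClosed (C k) := by
        intro k
        exact (hXclosed.inter ((isClosed_le hfc continuous_const).inter
          (isClosed_le hgc continuous_const)) : IsClosed _)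
      have hCne : ∀ k, (C k).Nonempty := by
        intro k
        obtain ⟨x, hxX, hgx, hfx⟩ := h (1 / (k + 1)) (by positivity)
        exact ⟨x, hxX, hfx, hgx⟩
      have hCmono : ∀ k, C (k + 1) ⊆ C k := by
        intro k x hx
        refine ⟨hx.1, hx.2.1, hx.2.2.trans ?_⟩
        apply one_div_le_one_div_of_le (by positivity)
        push_cast; linarith
      have hC0 : IsCompact (C 0) :=
        (isCompact_closedBall (0 : EuclideanSpace ℝ (Fin n)) (max R 0)).of_isClosed_subset
          (hCcl 0) (hCsub 0)
      obtain ⟨x, hx⟩ := IsCompact.nonempty_iInter_of_sequence_nonempty_isCompact_isClosed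
        C hCmono hCne hC0 hCcl
      simp only [Set.mem_iInter] at hx
      have hxX : x ∈ 𝒳 := (hx 0).1
      have hxf : f x ≤ τp - ε / 2 := (hx 0).2.1
      have hxg : g x ≤ 0 := by
        by_contra hgx
        push_neg at hgx
        obtain ⟨k, hk⟩ := exists_nat_one_div_lt hgx
        exact absurd ((hx k).2.2) (by push_cast; push_cast at hk; linarith)
      linarith [hlb x hxX hxg]
    obtain ⟨δ, hδpos, hδ⟩ := hδ
    -- Step 2: the epigraph-like set A and separation of (0, r)
    set A : Set (ℝ × ℝ) := {q | ∃ x ∈ 𝒳, g x ≤ q.1 ∧ f x ≤ q.2} with hA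
    have hAcvx : Convex ℝ A := by
      rintro ⟨u1, t1⟩ ⟨x1, hx1, hg1, hf1⟩ ⟨u2, t2⟩ ⟨x2, hx2, hg2, hf2⟩ a b ha hb hab
      refine ⟨a • x1 + b • x2, hXcvx hx1 hx2 ha hb hab, ?_, ?_⟩
      · have := hg.2 (Set.mem_univ x1) (Set.mem_univ x2) ha hb hab
        simp only [smul_eq_mul] at this
        simp only [Prod.fst_add, Prod.smul_fst, smul_eq_mul]
        nlinarith [mul_le_mul_of_nonneg_left hg1 ha, mul_le_mul_of_nonneg_left hg2 hb]
      · have := hf.2 (Set.mem_univ x1) (Set.mem_univ x2) ha hb hab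
        simp only [smul_eq_mul] at this
        simp only [Prod.snd_add, Prod.smul_snd, smul_eq_mul]
        nlinarith [mul_le_mul_of_nonneg_left hf1 ha, mul_le_mul_of_nonneg_left hf2 hb]
    have hpA : ((0 : ℝ), r) ∉ closure A := by
      intro hp
      rw [Metric.mem_closure_iff] at hp
      obtain ⟨q, hqA, hqd⟩ := hp (min δ (ε / 2)) (by positivity)
      obtain ⟨x, hx, hgx, hfx⟩ := hqA
      rw [Prod.dist_eq, Real.dist_eq, Real.dist_eq] at hqd
      have h1 : |(0:ℝ) - q.1| < min δ (ε / 2) := lt_of_le_of_lt (le_max_left _ _) hqd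
      have h2 : |r - q.2| < min δ (ε / 2) := lt_of_le_of_lt (le_max_right _ _) hqd
      rw [abs_sub_comm] at h1 h2
      have h1 : |q.1 - 0| < min δ (ε / 2) := h1
      have h2 : |q.2 - r| < min δ (ε / 2) := h2
      have hq1 : q.1 ≤ δ := by
        have := abs_lt.1 h1
        have := min_le_left δ (ε / 2)
        linarith [this, (abs_lt.1 h1).2]
      have hq2 : q.2 ≤ τp - ε / 2 := by
        have := (abs_lt.1 h2).2
        have := min_le_right δ (ε / 2)
        linarith [(abs_lt.1 h2).2, min_le_right δ (ε / 2)]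
      exact hδ x hx (hgx.trans hq1) (hfx.trans hq2)
    obtain ⟨φ, c, hc1, hc2⟩ :=
      geometric_hahn_banach_point_closed hAcvx.closure isClosed_closure hpA
    set a : ℝ := φ (1, 0) with ha'
    set b : ℝ := φ (0, 1) with hb'
    have hφ : ∀ u t : ℝ, φ (u, t) = a * u + b * t := by
      intro u t
      have hdec : ((u, t) : ℝ × ℝ) = u • ((1 : ℝ), (0 : ℝ)) + t • ((0 : ℝ), (1 : ℝ)) := by
        simp [Prod.ext_iff]
      rw [hdec, map_add, map_smul, map_smul, smul_eq_mul, smul_eq_mul, ← ha', ← hb']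
      ring
    have hbA : ∀ q ∈ A, c < a * q.1 + b * q.2 := by
      intro q hq
      have := hc2 q (subset_closure hq)
      rwa [show q = (q.1, q.2) from rfl, hφ] at this
    have hc1' : b * r < c := by
      have := hc1
      rw [hφ] at this
      simpa using this
    -- the linear functional has nonnegative coefficients
    have hanneg : 0 ≤ a := by
      by_contra h
      push_neg at h
      set s : ℝ := max 0 ((c - b * f x₀) / a + 1) with hs'
      have hs0 : 0 ≤ s := le_max_left _ _
      have hmem : ((s, f x₀) : ℝ × ℝ) ∈ A := ⟨x₀, hx₀X, hgx₀.trans hs0, le_refl _⟩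
      have h1 := hbA _ hmem
      have hs : (c - b * f x₀) / a + 1 ≤ s := le_max_right _ _
      have h2 : a * s ≤ a * ((c - b * f x₀) / a + 1) := mul_le_mul_of_nonpos_left hs h.le
      have ha0 : a ≠ 0 := ne_of_lt h
      have h3 : a * ((c - b * f x₀) / a + 1) = c - b * f x₀ + a := by
        field_simp
        all_goals ring
      simp only [h3] at h2
      simp only at h1
      linarith
    have hbnneg : 0 ≤ b := by
      by_contra h
      push_neg at h
      set s : ℝ := max (f x₀) ((c - a * 0) / b + 1) with hs'
      have hs0 : f x₀ ≤ s := le_max_left _ _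
      have hmem : (((0 : ℝ), s) : ℝ × ℝ) ∈ A := ⟨x₀, hx₀X, hgx₀, hs0⟩
      have h1 := hbA _ hmem
      have hs : (c - a * 0) / b + 1 ≤ s := le_max_right _ _
      have h2 : b * s ≤ b * ((c - a * 0) / b + 1) := mul_le_mul_of_nonpos_left hs h.le
      have hb0 : b ≠ 0 := ne_of_lt h
      have h3 : b * ((c - a * 0) / b + 1) = c - a * 0 + b := by
        field_simp
        all_goals ring
      simp only [h3] at h2
      simp only at h1
      linarith
    have hbpos : 0 < b := by
      rcases lt_or_eq_of_le hbnneg with h | h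
      · exact h
      · exfalso
        have hmem : (((0 : ℝ), f x₀) : ℝ × ℝ) ∈ A := ⟨x₀, hx₀X, hgx₀, le_refl _⟩
        have h1 := hbA _ hmem
        rw [← h] at h1 hc1'
        simp at h1 hc1'
        linarith
    -- Step 3: the multiplier
    set lam : ℝ := -(a / b) with hlam'
    have hlam : lam ≤ 0 := by
      have : 0 ≤ a / b := div_nonneg hanneg hbpos.le
      simp [hlam']; linarith
    have hkey : ∀ x ∈ 𝒳, r ≤ f x - lam * g x := by
      intro x hx
      have hmem : ((g x, f x) : ℝ × ℝ) ∈ A := ⟨x, hx, le_refl _, le_refl _⟩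
      have h1 := hbA _ hmem
      simp only at h1
      have h2 : b * r < b * (f x - lam * g x) := by
        have : b * (f x - lam * g x) = a * g x + b * f x := by
          rw [hlam']
          field_simp
          ring
        rw [this]
        linarith
      exact le_of_lt ((mul_lt_mul_iff_right₀ hbpos).1 h2)
    have hinf : ((r : ℝ) : EReal) ≤ ⨅ x ∈ 𝒳, ((f x - lam * g x : ℝ) : EReal) :=
      le_iInf₂ fun x hx => EReal.coe_le_coe_iff.2 (hkey x hx)
    have hfin : ((r : ℝ) : EReal) ≤
        ⨆ (lam : ℝ) (_ : lam ≤ 0), ⨅ x ∈ 𝒳, ((f x - lam * g x : ℝ) : EReal) :=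
      hinf.trans (le_iSup₂ (f := fun (lam : ℝ) (_ : lam ≤ 0) =>
        ⨅ x ∈ 𝒳, ((f x - lam * g x : ℝ) : EReal)) lam hlam)
    exact absurd hfin (not_le.2 hDr)
  · -- weak duality
    apply iSup₂_le
    intro lam hlam
    rw [hτp]
    apply le_sInf
    rintro y ⟨x, hx, hgx, rfl⟩
    refine le_trans (iInf₂_le x hx) ?_
    have : f x - lam * g x ≤ f x := by nlinarith [mul_nonneg (neg_nonneg.2 hlam) (neg_nonneg.2 hgx)]
    exact_mod_cast this
end

section
/- Let 𝒳 ⊆ ℝⁿ be a nonempty compact convex set, f, g : ℝⁿ → ℝ convex lower-semicontinuous functions, and assume the primal value τ_p := inf{f(x) : x ∈ 𝒳, g(x) ≤ 0} is finite. Then strong duality holds: τ_p = sup_{λ ≤ 0} inf_{x ∈ 𝒳} (f(x) − λ·g(x)). -/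
open Pointwise


/-- **Strong duality under compactness of the constraint set.**
Let `𝒳 ⊆ ℝⁿ` be nonempty compact convex, `f, g` convex lower-semicontinuous, and let
the primal value `τp = inf {f(x) : x ∈ 𝒳, g(x) ≤ 0}` be finite (represented by the
real `τp`).  Then strong duality holds:
`τp = sup_{λ ≤ 0} inf_{x ∈ 𝒳} (f(x) - λ g(x))`. -/
theorem strong_duality_of_compact {n : ℕ}
    (𝒳 : Set (EuclideanSpace ℝ (Fin n))) (hXne : 𝒳.Nonempty)
    (hXcompact : IsCompact 𝒳) (hXcvx : Convex ℝ 𝒳)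
    (f g : EuclideanSpace ℝ (Fin n) → ℝ)
    (hf : ConvexOn ℝ Set.univ f) (hflsc : LowerSemicontinuous f)
    (hg : ConvexOn ℝ Set.univ g) (hglsc : LowerSemicontinuous g)
    (τp : ℝ)
    (hτp : (τp : EReal) = sInf {y : EReal | ∃ x ∈ 𝒳, g x ≤ 0 ∧ y = (f x : EReal)}) :
    (τp : EReal) =
      ⨆ (lam : ℝ) (_ : lam ≤ 0), ⨅ x ∈ 𝒳, ((f x - lam * g x : ℝ) : EReal) := by
  -- continuity of f and g
  have hfc : Continuous f := continuousOn_univ.mp (hf.continuousOn isOpen_univ)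
  have hgc : Continuous g := continuousOn_univ.mp (hg.continuousOn isOpen_univ)
  -- the feasible set is nonempty
  have hfeas : ∃ x₀ ∈ 𝒳, g x₀ ≤ 0 := by
    by_contra h
    push_neg at h
    have : {y : EReal | ∃ x ∈ 𝒳, g x ≤ 0 ∧ y = (f x : EReal)} = ∅ := by
      ext y
      simp only [Set.mem_setOf_eq, Set.mem_empty_iff_false, iff_false]
      rintro ⟨x, hx, hgx, -⟩
      exact absurd hgx (not_le.mpr (h x hx))
    rw [this, sInf_empty] at hτp
    exact EReal.coe_ne_top τp hτp
  obtain ⟨x₀, hx₀X, hgx₀⟩ := hfeas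
  -- τp is a lower bound on f over the feasible set
  have hlow : ∀ x ∈ 𝒳, g x ≤ 0 → τp ≤ f x := by
    intro x hx hgx
    have : (τp : EReal) ≤ (f x : EReal) := hτp ▸ sInf_le ⟨x, hx, hgx, rfl⟩
    exact_mod_cast this
  -- the "epigraph-like" convex closed set A
  set A : Set (ℝ × ℝ) := {p | ∃ x ∈ 𝒳, g x ≤ p.1 ∧ f x ≤ p.2} with hA_def
  have hAeq : A = ((fun x => (g x, f x)) '' 𝒳) + {q : ℝ × ℝ | 0 ≤ q.1 ∧ 0 ≤ q.2} := by
    ext p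
    constructor
    · rintro ⟨x, hx, h1, h2⟩
      exact ⟨(g x, f x), ⟨x, hx, rfl⟩, (p.1 - g x, p.2 - f x),
        ⟨by simpa using h1, by simpa using h2⟩, by ext <;> simp⟩
    · rintro ⟨q, ⟨x, hx, rfl⟩, r, ⟨hr1, hr2⟩, rfl⟩
      exact ⟨x, hx, by simpa using hr1, by simpa using hr2⟩
  have hAclosed : IsClosed A := by
    rw [hAeq]
    apply IsClosed.add_left_of_isCompact
    · exact (isClosed_le continuous_const continuous_fst).inter
        (isClosed_le continuous_const continuous_snd)
    · exact hXcompact.image (hgc.prodMk hfc)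
  have hAcvx : Convex ℝ A := by
    rintro p ⟨x, hx, hx1, hx2⟩ q ⟨y, hy, hy1, hy2⟩ a b ha hb hab
    refine ⟨a • x + b • y, hXcvx hx hy ha hb hab, ?_, ?_⟩
    · calc g (a • x + b • y) ≤ a * g x + b * g y :=
            hg.2 (Set.mem_univ x) (Set.mem_univ y) ha hb hab
        _ ≤ a * p.1 + b * q.1 := by
            gcongr
        _ = (a • p + b • q).1 := by simp
    · calc f (a • x + b • y) ≤ a * f x + b * f y :=
            hf.2 (Set.mem_univ x) (Set.mem_univ y) ha hb hab
        _ ≤ a * p.2 + b * q.2 := by gcongr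
        _ = (a • p + b • q).2 := by simp
  -- key: for every ε > 0 there is a dual multiplier achieving τp - ε
  have key : ∀ ε : ℝ, 0 < ε → ∃ lam : ℝ, lam ≤ 0 ∧
      ∀ x ∈ 𝒳, τp - ε ≤ f x - lam * g x := by
    intro ε hε
    have hp₀ : ((0 : ℝ), τp - ε) ∉ A := by
      rintro ⟨x, hx, h1, h2⟩
      have := hlow x hx h1
      simp only at h2
      linarith
    obtain ⟨φ, u, hu1, hu2⟩ := geometric_hahn_banach_point_closed hAcvx hAclosed hp₀
    set a : ℝ := φ (1, 0) with ha_def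
    set b : ℝ := φ (0, 1) with hb_def
    have hφ : ∀ p : ℝ × ℝ, φ p = p.1 * a + p.2 * b := by
      intro p
      have hp : p = p.1 • ((1 : ℝ), (0 : ℝ)) + p.2 • ((0 : ℝ), (1 : ℝ)) := by
        ext <;> simp
      rw [hp, map_add, map_smul, map_smul, smul_eq_mul, smul_eq_mul]
      simp [ha_def, hb_def]
    have hA : ∀ x ∈ 𝒳, u < g x * a + f x * b := by
      intro x hx
      have := hu2 (g x, f x) ⟨x, hx, le_rfl, le_rfl⟩
      rwa [hφ] at this
    have hub : (τp - ε) * b < u := by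
      have := hu1
      rw [hφ] at this
      simpa using this
    -- b ≥ 0
    have hb0 : 0 ≤ b := by
      by_contra hb
      push_neg at hb
      set t : ℝ := max (f x₀) ((u - g x₀ * a - 1) / b) with ht_def
      have hmem : ((g x₀, t) : ℝ × ℝ) ∈ A := ⟨x₀, hx₀X, le_rfl, le_max_left _ _⟩
      have h1 := hu2 _ hmem
      rw [hφ] at h1
      simp only at h1
      have h2 : (u - g x₀ * a - 1) / b ≤ t := le_max_right _ _
      have h3 : t * b ≤ u - g x₀ * a - 1 := by
        rw [div_le_iff_of_neg hb] at h2
        linarith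
      linarith
    -- a ≥ 0
    have ha0 : 0 ≤ a := by
      by_contra ha
      push_neg at ha
      set t : ℝ := max (g x₀) ((u - f x₀ * b - 1) / a) with ht_def
      have hmem : ((t, f x₀) : ℝ × ℝ) ∈ A := ⟨x₀, hx₀X, le_max_left _ _, le_rfl⟩
      have h1 := hu2 _ hmem
      rw [hφ] at h1
      simp only at h1
      have h2 : (u - f x₀ * b - 1) / a ≤ t := le_max_right _ _
      have h3 : t * a ≤ u - f x₀ * b - 1 := by
        rw [div_le_iff_of_neg ha] at h2
        linarith
      linarith
    -- b > 0
    have hbpos : 0 < b := by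
      rcases lt_or_eq_of_le hb0 with h | h
      · exact h
      · exfalso
        have h1 := hA x₀ hx₀X
        rw [← h] at h1
        have h2 : g x₀ * a ≤ 0 := mul_nonpos_iff.mpr (Or.inr ⟨hgx₀, ha0⟩)
        rw [← h] at hub
        simp at hub h1
        linarith
    refine ⟨-(a / b), by simp [div_nonneg ha0 hbpos.le], ?_⟩
    intro x hx
    have h1 := hA x hx
    have : f x - -(a / b) * g x = (g x * a + f x * b) / b := by
      field_simp
      ring
    rw [this, le_div_iff₀ hbpos]
    nlinarith
  -- assemble
  apply le_antisymm
  · -- τp ≤ dual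
    have hstep : ∀ ε : ℝ, 0 < ε →
        ((τp - ε : ℝ) : EReal) ≤
          ⨆ (lam : ℝ) (_ : lam ≤ 0), ⨅ x ∈ 𝒳, ((f x - lam * g x : ℝ) : EReal) := by
      intro ε hε
      obtain ⟨lam, hlam, h⟩ := key ε hε
      refine le_iSup₂_of_le lam hlam ?_
      exact le_iInf₂ fun x hx => EReal.coe_le_coe_iff.mpr (h x hx)
    set D := ⨆ (lam : ℝ) (_ : lam ≤ 0), ⨅ x ∈ 𝒳, ((f x - lam * g x : ℝ) : EReal) with hD
    by_contra hcon
    push_neg at hcon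
    have hbot : (⊥ : EReal) < D := lt_of_lt_of_le (EReal.bot_lt_coe _) (hstep 1 one_pos)
    have htop : D < ⊤ := lt_of_lt_of_le hcon le_top
    lift D to ℝ using ⟨htop.ne, hbot.ne'⟩ with d hd
    have hd' : ∀ ε : ℝ, 0 < ε → τp ≤ d + ε := by
      intro ε hε
      have := hstep ε hε
      rw [EReal.coe_le_coe_iff] at this
      linarith
    have : τp ≤ d := le_of_forall_pos_le_add hd'
    exact absurd (EReal.coe_le_coe_iff.mpr this) (not_le.mpr hcon)
  · -- weak duality: dual ≤ τp
    refine iSup₂_le fun lam hlam => ?_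
    rw [hτp]
    refine le_sInf ?_
    rintro y ⟨x, hx, hgx, rfl⟩
    calc (⨅ x ∈ 𝒳, ((f x - lam * g x : ℝ) : EReal))
        ≤ ((f x - lam * g x : ℝ) : EReal) := iInf₂_le x hx
      _ ≤ (f x : EReal) := by
          rw [EReal.coe_le_coe_iff]
          have : 0 ≤ lam * g x := mul_nonneg_iff.mpr (Or.inr ⟨hlam, hgx⟩)
          linarith
end

section
/- Let 𝒦 ⊆ ℝⁿ be a closed convex cone, c an element of the topological interior of the dual cone 𝒦* := {y : ⟨x, y⟩ ≥ 0 for all x ∈ 𝒦}, A : ℝⁿ → ℝᵐ a linear map, and b ∈ ℝᵐ such that the feasible set {x ∈ 𝒦 : Ax = b} is nonempty. Then strong duality holds for the conic program: inf{⟨c, x⟩ : x ∈ 𝒦, Ax = b} = sup_{y ∈ ℝᵐ} inf_{x ∈ 𝒦} (⟨c, x⟩ + ⟨y, b − Ax⟩). -/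
/-!
Since `c` is interior to the dual cone, `⟪c, x⟫ ≥ δ ‖x‖` on `𝒦` for some `δ > 0`. This
coercivity makes `ℳ = {(A x, t) : x ∈ 𝒦, ⟪c, x⟫ ≤ t}` closed; it is convex as well. If `r` lies
below the primal value then `(b, r) ∉ ℳ`, and a hyperplane strictly separating `(b, r)` from `ℳ`
cannot be vertical because, by feasibility, `ℳ` contains the upward ray above `b`. Its slope is a
dual point `y` whose dual objective is at least `r`.
-/

open scoped RealInnerProductSpace

open Set

theorem exists_pos_mul_norm_le_inner_of_mem_interior_dual {E : Type*}
    [NormedAddCommGroup E] [InnerProductSpace ℝ E] {K : Set E} {c : E}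
    (hc : c ∈ interior {y : E | ∀ x ∈ K, 0 ≤ ⟪x, y⟫}) :
    ∃ δ > 0, ∀ x ∈ K, δ * ‖x‖ ≤ ⟪c, x⟫ := by
  obtain ⟨δ, hδ, hball⟩ :=
    Metric.nhds_basis_closedBall.mem_iff.mp (mem_interior_iff_mem_nhds.mp hc)
  refine ⟨δ, hδ, fun x hx => ?_⟩
  have hmem : c - (δ * ‖x‖⁻¹) • x ∈ Metric.closedBall c δ := by
    rw [Metric.mem_closedBall, dist_eq_norm, sub_sub_cancel_left, norm_neg, norm_smul,
      Real.norm_of_nonneg (by positivity), mul_assoc]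
    exact mul_le_of_le_one_right hδ.le (inv_mul_le_one_of_le₀ le_rfl (norm_nonneg x))
  have h := hball hmem x hx
  have hnorm : δ * ‖x‖⁻¹ * ‖x‖ ^ 2 = δ * ‖x‖ := by
    rcases eq_or_ne ‖x‖ 0 with h0 | h0
    · simp [h0]
    · field_simp
  rw [inner_sub_right, real_inner_smul_right, real_inner_self_eq_norm_sq, hnorm,
    real_inner_comm] at h
  linarith

theorem isCompact_inter_preimage_Iic_of_mul_norm_le {E : Type*} [NormedAddCommGroup E]
    [ProperSpace E] {K : Set E} (hK : IsClosed K) {f : E → ℝ} (hf : Continuous f) {δ : ℝ}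
    (hδ : 0 < δ) (hcoer : ∀ x ∈ K, δ * ‖x‖ ≤ f x) (T : ℝ) : IsCompact (K ∩ f ⁻¹' Iic T) :=
  (isCompact_closedBall 0 (T / δ)).of_isClosed_subset (hK.inter (isClosed_Iic.preimage hf))
    fun x ⟨hxK, hxT⟩ => by
      rw [mem_closedBall_zero_iff, le_div_iff₀' hδ]
      exact (hcoer x hxK).trans hxT

def epigraphImage {X Y : Type*} (K : Set X) (g : X → Y) (f : X → ℝ) : Set (Y × ℝ) :=
  {z | ∃ x ∈ K, g x = z.1 ∧ f x ≤ z.2}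

section Topology

variable {X Y : Type*} [TopologicalSpace X] [TopologicalSpace Y] [T2Space Y] {K : Set X}
  {g : X → Y} {f : X → ℝ}

theorem IsCompact.isClosed_epigraphImage (hK : IsCompact K) (hg : Continuous g)
    (hf : Continuous f) : IsClosed (epigraphImage K g f) := by
  have := isCompact_iff_compactSpace.mp hK
  have hR : IsClosed {p : K × (Y × ℝ) | g p.1 = p.2.1 ∧ f p.1 ≤ p.2.2} :=
    (isClosed_eq (hg.comp (continuous_subtype_val.comp continuous_fst))
      (continuous_fst.comp continuous_snd)).inter
    (isClosed_le (hf.comp (continuous_subtype_val.comp continuous_fst))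
      (continuous_snd.comp continuous_snd))
  convert isClosedMap_snd_of_compactSpace _ hR using 1
  ext z
  constructor
  · rintro ⟨x, hx, hgx, hfx⟩
    exact ⟨(⟨x, hx⟩, z), ⟨hgx, hfx⟩, rfl⟩
  · rintro ⟨⟨x, z⟩, ⟨hgx, hfx⟩, rfl⟩
    exact ⟨x, x.2, hgx, hfx⟩

theorem isClosed_epigraphImage (hg : Continuous g) (hf : Continuous f)
    (hK : ∀ T, IsCompact (K ∩ f ⁻¹' Iic T)) : IsClosed (epigraphImage K g f) := by
  refine isClosed_of_closure_subset fun z hz => ?_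
  set U := {w : Y × ℝ | w.2 < z.2 + 1}
  have hzU : z ∈ closure (U ∩ epigraphImage K g f) :=
    (isOpen_lt continuous_snd continuous_const).inter_closure ⟨lt_add_one z.2, hz⟩
  have hsub : U ∩ epigraphImage K g f ⊆ epigraphImage (K ∩ f ⁻¹' Iic (z.2 + 1)) g f :=
    fun w ⟨hwU, x, hxK, hgx, hfx⟩ => ⟨x, ⟨hxK, hfx.trans hwU.le⟩, hgx, hfx⟩
  obtain ⟨x, hx, hgx, hfx⟩ :=
    ((hK _).isClosed_epigraphImage hg hf).closure_subset (closure_mono hsub hzU)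
  exact ⟨x, hx.1, hgx, hfx⟩

end Topology

theorem ConvexOn.convex_epigraphImage {E F : Type*} [AddCommGroup E] [Module ℝ E]
    [AddCommGroup F] [Module ℝ F] {K : Set E} {f : E → ℝ} (hf : ConvexOn ℝ K f)
    (g : E →ₗ[ℝ] F) : Convex ℝ (epigraphImage K g f) := by
  rintro ⟨w₁, t₁⟩ ⟨x₁, hx₁, hg₁, hf₁⟩ ⟨w₂, t₂⟩ ⟨x₂, hx₂, hg₂, hf₂⟩ a b ha hb hab
  refine ⟨a • x₁ + b • x₂, hf.1 hx₁ hx₂ ha hb hab, by simp_all, ?_⟩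
  calc f (a • x₁ + b • x₂) ≤ a * f x₁ + b * f x₂ := hf.2 hx₁ hx₂ ha hb hab
    _ ≤ a * t₁ + b * t₂ := by dsimp only at hf₁ hf₂; gcongr
    _ = _ := by simp

theorem exists_lt_add_inner_sub_of_notMem {F : Type*} [NormedAddCommGroup F]
    [InnerProductSpace ℝ F] [CompleteSpace F] {M : Set (F × ℝ)} (hconv : Convex ℝ M)
    (hclosed : IsClosed M) {b : F} {t₀ r : ℝ} (hray : ∀ t, t₀ ≤ t → (b, t) ∈ M)
    (hr : (b, r) ∉ M) : ∃ y : F, ∀ z ∈ M, r < z.2 + ⟪y, b - z.1⟫ := by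
  obtain ⟨ℓ, u, hℓr, hℓM⟩ := geometric_hahn_banach_point_closed hconv hclosed hr
  set φ := ℓ.comp (ContinuousLinearMap.inl ℝ F ℝ)
  set β := ℓ (0, 1)
  have hℓ : ∀ z : F × ℝ, ℓ z = φ z.1 + z.2 * β := fun z => by
    rw [← smul_eq_mul, ← map_smul, Prod.smul_mk, smul_zero, smul_eq_mul, mul_one]
    simp [φ, ← map_add]
  -- `ℓ` must increase along the ray `{b} × [t₀, ∞)` contained in `M`
  have hβ : 0 < β := by
    by_contra! hβ
    have hmax := hℓM _ (hray _ (le_max_left t₀ r))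
    rw [hℓ] at hmax hℓr
    nlinarith [mul_le_mul_of_nonpos_right (le_max_right t₀ r) hβ]
  refine ⟨-β⁻¹ • (InnerProductSpace.toDual ℝ F).symm φ, fun z hz => ?_⟩
  have hz := hℓM z hz
  rw [hℓ] at hz hℓr
  rw [real_inner_smul_left, InnerProductSpace.toDual_symm_apply, map_sub]
  field_simp
  dsimp only at hℓr
  linarith

section ConicProgram

variable {E F : Type*} [NormedAddCommGroup E] [InnerProductSpace ℝ E]
  [NormedAddCommGroup F] [InnerProductSpace ℝ F]

noncomputable def conicPrimalValue (K : Set E) (c : E) (A : E →ₗ[ℝ] F) (b : F) : EReal :=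
  sInf {t | ∃ x ∈ K, A x = b ∧ t = ((⟪c, x⟫ : ℝ) : EReal)}

noncomputable def conicDualValue (K : Set E) (c : E) (A : E →ₗ[ℝ] F) (b : F) : EReal :=
  ⨆ y : F, ⨅ x ∈ K, ((⟪c, x⟫ + ⟪y, b - A x⟫ : ℝ) : EReal)

theorem conicDualValue_le_conicPrimalValue (K : Set E) (c : E) (A : E →ₗ[ℝ] F) (b : F) :
    conicDualValue K c A b ≤ conicPrimalValue K c A b := by
  refine iSup_le fun y => le_sInf ?_
  rintro _ ⟨x, hx, rfl, rfl⟩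
  exact (iInf₂_le x hx).trans_eq (by simp)

theorem conicPrimalValue_le_conicDualValue [FiniteDimensional ℝ E] [CompleteSpace F]
    {K : Set E} (hK : IsClosed K) (hcvx : Convex ℝ K) {c : E}
    (hc : c ∈ interior {y : E | ∀ x ∈ K, 0 ≤ ⟪x, y⟫}) (A : E →ₗ[ℝ] F) {b : F}
    (hfeas : ∃ x ∈ K, A x = b) : conicPrimalValue K c A b ≤ conicDualValue K c A b := by
  obtain ⟨x₀, hx₀, hAx₀⟩ := hfeas
  obtain ⟨δ, hδ, hcoer⟩ := exists_pos_mul_norm_le_inner_of_mem_interior_dual hc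
  set M := epigraphImage K A (⟪c, ·⟫)
  have hcont : Continuous (⟪c, ·⟫) := continuous_const.inner continuous_id
  have hMclosed : IsClosed M := isClosed_epigraphImage A.continuous_of_finiteDimensional hcont
    (isCompact_inter_preimage_Iic_of_mul_norm_le hK hcont hδ hcoer)
  have hMconv : Convex ℝ M := ((innerₛₗ ℝ c).convexOn hcvx).convex_epigraphImage A
  refine le_of_forall_lt_imp_le_of_dense fun e he => ?_
  induction e using EReal.rec with
  | bot => exact bot_le
  | top => exact absurd he not_top_lt
  | coe r =>
    have hr : (b, r) ∉ M := fun ⟨x, hx, hAx, hcx⟩ =>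
      (he.trans_le (sInf_le ⟨x, hx, hAx, rfl⟩)).not_ge (EReal.coe_le_coe hcx)
    obtain ⟨y, hy⟩ := exists_lt_add_inner_sub_of_notMem hMconv hMclosed
      (fun t ht => ⟨x₀, hx₀, hAx₀, ht⟩) hr
    refine le_iSup_of_le y (le_iInf₂ fun x hx => EReal.coe_le_coe_iff.mpr ?_)
    exact (hy (A x, ⟪c, x⟫) ⟨x, hx, rfl, le_rfl⟩).le

end ConicProgram

theorem conic_strong_duality_general {n m : ℕ}
    (𝒦 : Set (EuclideanSpace ℝ (Fin n)))
    (hclosed : IsClosed 𝒦) (hcvx : Convex ℝ 𝒦)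
    (c : EuclideanSpace ℝ (Fin n))
    (hc : c ∈ interior {y : EuclideanSpace ℝ (Fin n) | ∀ x ∈ 𝒦, 0 ≤ ⟪x, y⟫})
    (A : EuclideanSpace ℝ (Fin n) →ₗ[ℝ] EuclideanSpace ℝ (Fin m))
    (b : EuclideanSpace ℝ (Fin m))
    (hfeas : ∃ x ∈ 𝒦, A x = b) :
    sInf {t : EReal | ∃ x ∈ 𝒦, A x = b ∧ t = ((⟪c, x⟫ : ℝ) : EReal)} =
      ⨆ y : EuclideanSpace ℝ (Fin m),
        ⨅ x ∈ 𝒦, ((⟪c, x⟫ + ⟪y, b - A x⟫ : ℝ) : EReal) :=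
  le_antisymm (conicPrimalValue_le_conicDualValue hclosed hcvx hc A hfeas)
    (conicDualValue_le_conicPrimalValue 𝒦 c A b)

/-- **Strong duality for conic programs with `c` interior to the dual cone.**
Let `𝒦 ⊆ ℝⁿ` be a closed convex cone, `c` in the interior of the dual cone
`𝒦* = {y : ⟨x, y⟩ ≥ 0 ∀ x ∈ 𝒦}`, `A : ℝⁿ → ℝᵐ` linear and `b ∈ ℝᵐ` with
`{x ∈ 𝒦 : Ax = b}` nonempty.  Then strong duality holds:
`inf {⟨c, x⟩ : x ∈ 𝒦, Ax = b} = sup_y inf_{x ∈ 𝒦} (⟨c, x⟩ + ⟨y, b - Ax⟩)`. -/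
theorem conic_strong_duality {n m : ℕ}
    (𝒦 : Set (EuclideanSpace ℝ (Fin n)))
    (hclosed : IsClosed 𝒦) (hcvx : Convex ℝ 𝒦)
    (hcone : ∀ x ∈ 𝒦, ∀ t : ℝ, 0 ≤ t → t • x ∈ 𝒦)
    (c : EuclideanSpace ℝ (Fin n))
    (hc : c ∈ interior {y : EuclideanSpace ℝ (Fin n) | ∀ x ∈ 𝒦, 0 ≤ ⟪x, y⟫})
    (A : EuclideanSpace ℝ (Fin n) →ₗ[ℝ] EuclideanSpace ℝ (Fin m))
    (b : EuclideanSpace ℝ (Fin m))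
    (hfeas : ∃ x ∈ 𝒦, A x = b) :
    sInf {t : EReal | ∃ x ∈ 𝒦, A x = b ∧ t = ((⟪c, x⟫ : ℝ) : EReal)} =
      ⨆ y : EuclideanSpace ℝ (Fin m),
        ⨅ x ∈ 𝒦, ((⟪c, x⟫ + ⟪y, b - A x⟫ : ℝ) : EReal) :=
  conic_strong_duality_general 𝒦 hclosed hcvx c hc A b hfeas
end

section
/- Let 𝒜 be a real-linear map from the real vector space of n×n complex Hermitian matrices to ℝᵐ and let b ∈ ℝᵐ be such that there exists a Hermitian positive semidefinite X with 𝒜X = b. Then strong duality holds for the trace-minimization SDP: inf{trace(X) : X Hermitian PSD, 𝒜X = b} = sup_{y ∈ ℝᵐ} inf{trace(X) + ⟨y, b − 𝒜X⟩ : X Hermitian PSD}. -/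
open scoped RealInnerProductSpace ComplexOrder

/-!
Weak duality is immediate. For the reverse inequality, map the PSD cone to `ℝᵐ × ℝ` by
`X ↦ (𝒜 X, tr X)`. A PSD matrix of trace zero vanishes, so this linear map is injective on the
cone, and a closed cone in finite dimension that meets the kernel of a linear map only in `0` has
a closed image. If `z` is below the primal value, `(b, z)` lies outside this closed convex cone;
a separating functional `(v, t) ↦ ⟪y₀, v⟫ + t s` then has `s > 0` because the problem is feasible,
and `y = -y₀ / s` is a dual point of value at least `z`.
-/

theorem isClosed_image_of_mul_norm_le {E F : Type*} [NormedAddCommGroup E] [ProperSpace E]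
    [NormedAddCommGroup F] {K : Set E} (hK : IsClosed K) {g : E → F} (hg : Continuous g)
    {δ : ℝ} (hδ : 0 < δ) (hgK : ∀ x ∈ K, δ * ‖x‖ ≤ ‖g x‖) : IsClosed (g '' K) := by
  refine isClosed_of_closure_subset fun y hy => ?_
  set R := (‖y‖ + 1) / δ
  have hsub : g '' (K ∩ Metric.closedBall 0 R) ⊆ g '' K := Set.image_mono Set.inter_subset_left
  have hclosed : IsClosed (g '' (K ∩ Metric.closedBall 0 R)) :=
    ((isCompact_closedBall 0 R).inter_left hK |>.image hg).isClosed
  refine hsub (hclosed.closure_subset (Metric.mem_closure_iff.mpr fun ε hε => ?_))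
  obtain ⟨_, ⟨x, hx, rfl⟩, hdist⟩ := Metric.mem_closure_iff.mp hy (min ε 1) (by positivity)
  refine ⟨g x, ⟨x, ⟨hx, ?_⟩, rfl⟩, hdist.trans_le (min_le_left _ _)⟩
  have hgx : ‖g x‖ ≤ ‖y‖ + 1 := norm_le_norm_add_const_of_dist_le <| by
    rw [dist_comm]
    exact hdist.le.trans (min_le_right _ _)
  rw [mem_closedBall_zero_iff, le_div_iff₀ hδ, mul_comm]
  exact (hgK x hx).trans hgx

namespace PointedCone

section Normed

variable {E F : Type*} [NormedAddCommGroup E] [NormedSpace ℝ E]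
  [NormedAddCommGroup F] [NormedSpace ℝ F]

-- `‖L ·‖` attains a positive minimum on the compact set `K ∩ sphere 0 1`; rescale.
theorem exists_pos_mul_norm_le_norm_apply [ProperSpace E] (K : PointedCone ℝ E)
    (hK : IsClosed (K : Set E)) (L : E →L[ℝ] F) (hL : ∀ x ∈ K, L x = 0 → x = 0) :
    ∃ δ > 0, ∀ x ∈ K, δ * ‖x‖ ≤ ‖L x‖ := by
  have hcomp : IsCompact ((K : Set E) ∩ Metric.sphere 0 1) :=
    (isCompact_sphere 0 1).inter_left hK
  have hnormalize (x : E) (hx : x ∈ K) (hx0 : x ≠ 0) :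
      ‖x‖⁻¹ • x ∈ (K : Set E) ∩ Metric.sphere 0 1 :=
    ⟨K.smul_mem (inv_nonneg.mpr (norm_nonneg x)) hx, by simp [norm_smul, hx0]⟩
  obtain hempty | hne := ((K : Set E) ∩ Metric.sphere 0 1).eq_empty_or_nonempty
  · refine ⟨1, one_pos, fun x hx => ?_⟩
    obtain rfl : x = 0 := by
      by_contra hx0
      simpa [hempty] using hnormalize x hx hx0
    simp
  obtain ⟨u, ⟨huK, hu⟩, hmin⟩ :=
    hcomp.exists_isMinOn hne (continuous_norm.comp L.continuous).continuousOn
  have hu0 : u ≠ 0 := by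
    rintro rfl
    simp at hu
  refine ⟨‖L u‖, norm_pos_iff.mpr fun h => hu0 (hL u huK h), fun x hx => ?_⟩
  rcases eq_or_ne x 0 with rfl | hx0
  · simp
  have hLx := isMinOn_iff.mp hmin _ (hnormalize x hx hx0)
  simp only [Function.comp_apply, map_smul, norm_smul, norm_inv, norm_norm] at hLx
  rwa [le_inv_mul_iff₀ (norm_pos_iff.mpr hx0), mul_comm] at hLx

theorem isClosed_map_of_apply_eq_zero [FiniteDimensional ℝ E] (K : PointedCone ℝ E)
    (hK : IsClosed (K : Set E)) (L : E →ₗ[ℝ] F) (hL : ∀ x ∈ K, L x = 0 → x = 0) :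
    IsClosed (K.map L : Set F) := by
  have : ProperSpace E := FiniteDimensional.proper ℝ E
  obtain ⟨δ, hδ, hLK⟩ := K.exists_pos_mul_norm_le_norm_apply hK L.toContinuousLinearMap hL
  exact isClosed_image_of_mul_norm_le hK L.continuous_of_finiteDimensional hδ hLK

end Normed

theorem exists_lagrangian_lower_bound {E H : Type*} [AddCommGroup E] [Module ℝ E]
    [NormedAddCommGroup H] [InnerProductSpace ℝ H] [CompleteSpace H]
    (K : PointedCone ℝ E) (L : E →ₗ[ℝ] H) (τ : E →ₗ[ℝ] ℝ) {b : H} {z : ℝ}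
    (hclosed : IsClosed (K.map (L.prod τ) : Set (H × ℝ)))
    {x₀ : E} (hx₀ : x₀ ∈ K) (hLx₀ : L x₀ = b) (hz : ∀ x ∈ K, L x = b → z < τ x) :
    ∃ y : H, ∀ x ∈ K, z ≤ τ x + ⟪y, b - L x⟫ := by
  have hbz : (b, z) ∉ K.map (L.prod τ) := by
    rintro ⟨x, hx, hxbz⟩
    obtain ⟨hLx, hτx⟩ := Prod.mk.inj hxbz
    exact (hz x hx hLx).ne' hτx
  obtain ⟨f, hfK, hfbz⟩ := ProperCone.hyperplane_separation_point ⟨_, hclosed⟩ hbz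
  set y₀ := (InnerProductSpace.toDual ℝ H).symm (f.comp (.inl ℝ H ℝ))
  set s := f (0, 1)
  have hf (v : H) (t : ℝ) : f (v, t) = ⟪y₀, v⟫ + t * s := by
    rw [show ((v, t) : H × ℝ) = (v, 0) + t • (0, 1) by simp, map_add, map_smul,
      InnerProductSpace.toDual_symm_apply]
    rfl
  have hK (x : E) (hx : x ∈ K) : 0 ≤ ⟪y₀, L x⟫ + τ x * s := by
    simpa [hf] using hfK (L.prod τ x) ⟨x, hx, rfl⟩
  rw [hf] at hfbz
  have hs : 0 < s := by
    have hgap : 0 < (τ x₀ - z) * s := by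
      have := hK x₀ hx₀
      rw [hLx₀] at this
      linarith
    exact pos_of_mul_pos_right hgap (sub_pos.mpr (hz x₀ hx₀ hLx₀)).le
  refine ⟨-s⁻¹ • y₀, fun x hx => ?_⟩
  have := hK x hx
  rw [real_inner_smul_left, inner_sub_right]
  field_simp
  linarith

end PointedCone

namespace Matrix

variable {n 𝕜 : Type*} [Fintype n] [RCLike 𝕜]

theorem isClosed_setOf_posSemidef : IsClosed {A : Matrix n n 𝕜 | A.PosSemidef} := by
  simp only [posSemidef_iff_dotProduct_mulVec, Set.ofPred_and, Set.ofPred_forall]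
  exact (isClosed_eq continuous_id.matrix_conjTranspose continuous_id).inter
    (isClosed_iInter fun x => isClosed_le continuous_const (by fun_prop))

variable (n 𝕜) in
def posSemidefCone : PointedCone ℝ (Matrix n n 𝕜) where
  carrier := {A | A.PosSemidef}
  add_mem' := PosSemidef.add
  zero_mem' := PosSemidef.zero
  smul_mem' c _ hA := hA.smul c.2

theorem PosSemidef.eq_zero_of_re_trace_eq_zero {A : Matrix n n 𝕜} (hA : A.PosSemidef)
    (h : RCLike.re A.trace = 0) : A = 0 :=
  hA.trace_eq_zero_iff.mp <|
    RCLike.ext (by simpa using h) (by simpa using (RCLike.nonneg_iff.mp hA.trace_nonneg).2)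

-- Only the topology matters here, and all norms on a finite-dimensional space induce it.
attribute [local instance] Matrix.normedAddCommGroup Matrix.normedSpace in
theorem isClosed_map_posSemidefCone_prod_re_trace {F : Type*} [NormedAddCommGroup F]
    [NormedSpace ℝ F] (L : Matrix n n 𝕜 →ₗ[ℝ] F) :
    IsClosed ((posSemidefCone n 𝕜).map (L.prod (RCLike.reLm ∘ₗ traceLinearMap n ℝ 𝕜)) :
      Set (F × ℝ)) :=
  (posSemidefCone n 𝕜).isClosed_map_of_apply_eq_zero isClosed_setOf_posSemidef _
    fun _ hA hA0 => PosSemidef.eq_zero_of_re_trace_eq_zero hA (congrArg Prod.snd hA0)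

end Matrix

/-- **Strong duality for the trace-minimization (phase-retrieval) SDP.**
Let `𝒜` be a real-linear map from the real vector space of `n×n` complex Hermitian
matrices to `ℝᵐ` and `b ∈ ℝᵐ` such that some Hermitian PSD matrix `X` satisfies
`𝒜X = b`.  Then strong duality holds:
`inf {tr X : X ⪰ 0, 𝒜X = b} = sup_y inf_{X ⪰ 0} (tr X + ⟨y, b - 𝒜X⟩)`
(the trace of a Hermitian matrix being real). -/
theorem trace_sdp_strong_duality {n m : ℕ}
    (𝒜 : selfAdjoint (Matrix (Fin n) (Fin n) ℂ) →ₗ[ℝ] EuclideanSpace ℝ (Fin m))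
    (b : EuclideanSpace ℝ (Fin m))
    (hfeas : ∃ X : selfAdjoint (Matrix (Fin n) (Fin n) ℂ),
      (X : Matrix (Fin n) (Fin n) ℂ).PosSemidef ∧ 𝒜 X = b) :
    sInf {t : EReal | ∃ X : selfAdjoint (Matrix (Fin n) (Fin n) ℂ),
        (X : Matrix (Fin n) (Fin n) ℂ).PosSemidef ∧ 𝒜 X = b ∧
          t = (((X : Matrix (Fin n) (Fin n) ℂ).trace.re : ℝ) : EReal)} =
      ⨆ y : EuclideanSpace ℝ (Fin m),
        ⨅ (X : selfAdjoint (Matrix (Fin n) (Fin n) ℂ))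
          (_ : (X : Matrix (Fin n) (Fin n) ℂ).PosSemidef),
          (((X : Matrix (Fin n) (Fin n) ℂ).trace.re + ⟪y, b - 𝒜 X⟫ : ℝ) : EReal) := by
  obtain ⟨X₀, hX₀, hAX₀⟩ := hfeas
  have hpart (X : selfAdjoint (Matrix (Fin n) (Fin n) ℂ)) :
      selfAdjointPart ℝ (X : Matrix (Fin n) (Fin n) ℂ) = X :=
    X.2.selfAdjointPart_apply ℝ
  refine le_antisymm (EReal.ge_of_forall_gt_iff_ge.mp fun z hz => ?_) ?_
  · obtain ⟨y, hy⟩ := (Matrix.posSemidefCone (Fin n) ℂ).exists_lagrangian_lower_bound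
      (𝒜 ∘ₗ selfAdjointPart ℝ) _ (Matrix.isClosed_map_posSemidefCone_prod_re_trace _)
      (b := b) hX₀ (by simp [hpart, hAX₀]) fun A (hA : A.PosSemidef) hLA => by
        have hA' : (selfAdjointPart ℝ A : Matrix (Fin n) (Fin n) ℂ) = A :=
          hA.1.isSelfAdjoint.coe_selfAdjointPart_apply ℝ
        exact EReal.coe_lt_coe_iff.mp <| hz.trans_le <| sInf_le
          ⟨selfAdjointPart ℝ A, by rwa [hA'], hLA, by rw [hA']; rfl⟩
    refine le_iSup_of_le y (le_iInf₂ fun X hX => ?_)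
    have hyX := hy X hX
    simp only [LinearMap.comp_apply, hpart] at hyX
    exact_mod_cast hyX
  · refine iSup_le fun y => le_sInf ?_
    rintro _ ⟨X, hX, hAX, rfl⟩
    refine iInf₂_le_of_le X hX ?_
    simp [hAX]
end

section
/- Let 𝒳 ⊆ ℝⁿ be a nonempty closed convex set, f, g : ℝⁿ → ℝ convex continuous functions with f bounded below on 𝒳, let μ > 0, and assume {x ∈ 𝒳 : g(x) ≤ 0} is nonempty. Then the regularized problem minimize f(x) + μ·‖x‖ subject to x ∈ 𝒳, g(x) ≤ 0 satisfies strong duality: inf{f(x) + μ·‖x‖ : x ∈ 𝒳, g(x) ≤ 0} = sup_{λ ≤ 0} inf_{x ∈ 𝒳} (f(x) + μ·‖x‖ − λ·g(x)). -/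
open Filter Topology

private lemma combo_lt {a b p q p' q' : ℝ} (ha : 0 ≤ a) (hb : 0 ≤ b) (hab : a + b = 1)
    (h1 : p < p') (h2 : q < q') : a * p + b * q < a * p' + b * q' := by
  rcases ha.eq_or_lt with h | h
  · subst h; have hb1 : b = 1 := by linarith
    simp [hb1, h2]
  · have : a * p < a * p' := by exact (mul_lt_mul_iff_right₀ h).2 h1
    have : b * q ≤ b * q' := mul_le_mul_of_nonneg_left h2.le hb
    linarith [(mul_lt_mul_iff_right₀ h).2 h1]

/-- **Strong duality for the norm-regularized problem.**
Let `𝒳 ⊆ ℝⁿ` be nonempty closed convex, `f, g` convex continuous with `f` bounded below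
on `𝒳`, let `μ > 0`, and suppose the feasible set `{x ∈ 𝒳 : g(x) ≤ 0}` is nonempty.
Then the regularized problem `min f(x) + μ‖x‖ s.t. x ∈ 𝒳, g(x) ≤ 0` satisfies strong
duality:
`inf {f(x) + μ‖x‖ : x ∈ 𝒳, g(x) ≤ 0} = sup_{λ ≤ 0} inf_{x ∈ 𝒳} (f(x) + μ‖x‖ - λ g(x))`. -/
theorem strong_duality_of_regularized {n : ℕ}
    (𝒳 : Set (EuclideanSpace ℝ (Fin n))) (hXne : 𝒳.Nonempty)
    (hXclosed : IsClosed 𝒳) (hXcvx : Convex ℝ 𝒳)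
    (f g : EuclideanSpace ℝ (Fin n) → ℝ)
    (hf : ConvexOn ℝ Set.univ f) (hfc : Continuous f)
    (hg : ConvexOn ℝ Set.univ g) (hgc : Continuous g)
    (hbdd : ∃ B : ℝ, ∀ x ∈ 𝒳, B ≤ f x)
    (μ : ℝ) (hμ : 0 < μ)
    (hfeas : ∃ x ∈ 𝒳, g x ≤ 0) :
    sInf {y : EReal | ∃ x ∈ 𝒳, g x ≤ 0 ∧ y = ((f x + μ * ‖x‖ : ℝ) : EReal)} =
      ⨆ (lam : ℝ) (_ : lam ≤ 0),
        ⨅ x ∈ 𝒳, ((f x + μ * ‖x‖ - lam * g x : ℝ) : EReal) := by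
  classical
  set F : EuclideanSpace ℝ (Fin n) → ℝ := fun x => f x + μ * ‖x‖ with hF
  have hFc : Continuous F := by rw [hF]; exact hfc.add (continuous_const.mul continuous_norm)
  obtain ⟨B, hB⟩ := hbdd
  have hBF : ∀ x ∈ 𝒳, B ≤ F x := fun x hx => by
    have : 0 ≤ μ * ‖x‖ := mul_nonneg hμ.le (norm_nonneg x)
    have := hB x hx; simp only [hF]; linarith
  refine le_antisymm ?_ ?_
  · -- strong duality direction: sInf ≤ sup
    by_contra hcon
    rw [not_le] at hcon
    obtain ⟨r, hr1, hr2⟩ := EReal.exists_between_coe_real hcon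
    -- r < F x for all feasible x
    have hrP : ∀ x ∈ 𝒳, g x ≤ 0 → r < F x := by
      intro x hx hgx
      have hmem : ((F x : ℝ) : EReal) ∈
          {y : EReal | ∃ x ∈ 𝒳, g x ≤ 0 ∧ y = ((f x + μ * ‖x‖ : ℝ) : EReal)} :=
        ⟨x, hx, hgx, rfl⟩
      have := lt_of_lt_of_le hr2 (sInf_le hmem)
      exact_mod_cast this
    -- for each lam ≤ 0, some x ∈ 𝒳 with F x - lam * g x < r
    have hq : ∀ lam : ℝ, lam ≤ 0 → ∃ x ∈ 𝒳, F x - lam * g x < r := by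
      intro lam hlam
      have h1 : (⨅ x ∈ 𝒳, ((f x + μ * ‖x‖ - lam * g x : ℝ) : EReal)) < (r : EReal) :=
        lt_of_le_of_lt (le_iSup₂ (f := fun (lam : ℝ) (_ : lam ≤ 0) =>
          ⨅ x ∈ 𝒳, ((f x + μ * ‖x‖ - lam * g x : ℝ) : EReal)) lam hlam) hr1
      rw [iInf_lt_iff] at h1
      obtain ⟨x, hx⟩ := h1
      rw [iInf_lt_iff] at hx
      obtain ⟨hxX, hxlt⟩ := hx
      exact ⟨x, hxX, by exact_mod_cast hxlt⟩
    by_cases hgpos : ∀ x ∈ 𝒳, 0 ≤ g x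
    · -- no Slater point: limiting argument
      have hseq : ∀ k : ℕ, ∃ x ∈ 𝒳, F x + (k + 1) * g x < r := by
        intro k
        obtain ⟨x, hx, hlt⟩ := hq (-(k + 1)) (neg_nonpos.2 (by positivity))
        exact ⟨x, hx, by linarith [hlt]⟩
      choose x hxX hxlt using hseq
      have hFlt : ∀ k, F (x k) < r := by
        intro k
        have h0 : 0 ≤ ((k : ℝ) + 1) * g (x k) :=
          mul_nonneg (by positivity) (hgpos _ (hxX k))
        linarith [hxlt k]
      have hnorm : ∀ k, ‖x k‖ ≤ (r - B) / μ := by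
        intro k
        have h1 := hBF _ (hxX k)
        have h2 := hB _ (hxX k)
        have h3 := hFlt k
        rw [le_div_iff₀ hμ]
        simp only [hF] at h3
        nlinarith
      have hgle : ∀ k, g (x k) ≤ (r - B) / (k + 1) := by
        intro k
        have h1 := hBF _ (hxX k)
        have h2 := hxlt k
        rw [le_div_iff₀ (by positivity : (0:ℝ) < (k:ℝ) + 1)]
        nlinarith
      have hK : IsCompact (Metric.closedBall (0 : EuclideanSpace ℝ (Fin n)) ((r - B) / μ) ∩ 𝒳) :=
        (isCompact_closedBall _ _).inter_right hXclosed
      have hmem : ∀ k, x k ∈ Metric.closedBall (0 : EuclideanSpace ℝ (Fin n)) ((r - B) / μ) ∩ 𝒳 := fun k =>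
        ⟨mem_closedBall_zero_iff.2 (hnorm k), hxX k⟩
      obtain ⟨z, hzK, ψ, hψ, htend⟩ := hK.tendsto_subseq hmem
      have hzX : z ∈ 𝒳 := hzK.2
      have hFz : F z ≤ r :=
        le_of_tendsto ((hFc.tendsto z).comp htend)
          (Filter.Eventually.of_forall fun k => (hFlt (ψ k)).le)
      have hgz : g z ≤ 0 := by
        have hb : Tendsto (fun k : ℕ => (r - B) / ((k : ℝ) + 1)) atTop (𝓝 0) := by
          have := tendsto_one_div_add_atTop_nhds_zero_nat.const_mul (r - B)
          simpa [div_eq_mul_inv, mul_comm] using this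
        have hptw : ∀ k : ℕ, g (x (ψ k)) ≤ (r - B) / ((k : ℝ) + 1) := by
          intro k
          refine (hgle (ψ k)).trans ?_
          have hrB : 0 ≤ r - B := by
            have := hBF _ (hxX 0); have := hFlt 0; linarith
          apply div_le_div_of_nonneg_left hrB (by positivity)
          have hkψ : (k : ℝ) ≤ (ψ k : ℝ) := by exact_mod_cast hψ.le_apply
          linarith
        have := le_of_tendsto_of_tendsto' ((hgc.tendsto z).comp htend) hb hptw
        simpa using this
      exact absurd (hrP z hzX hgz) (not_lt.2 hFz)
    · -- Slater point exists: separation argument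
      push_neg at hgpos
      obtain ⟨xsl, hxslX, hxslg⟩ := hgpos
      set A : Set (ℝ × ℝ) := ⋃ (x : EuclideanSpace ℝ (Fin n)) (_ : x ∈ 𝒳), Set.Ioi (g x) ×ˢ Set.Ioi (F x) with hA
      have hmemA : ∀ p : ℝ × ℝ, p ∈ A ↔ ∃ x ∈ 𝒳, g x < p.1 ∧ F x < p.2 := by
        intro p
        simp only [hA, Set.mem_iUnion, Set.mem_prod, Set.mem_Ioi]
        tauto
      have hAopen : IsOpen A :=
        isOpen_iUnion fun x => isOpen_iUnion fun _ => isOpen_Ioi.prod isOpen_Ioi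
      have hAcvx : Convex ℝ A := by
        intro p hp q hq a b ha hb hab
        rw [hmemA] at hp hq ⊢
        obtain ⟨x1, hx1, hg1, hF1⟩ := hp
        obtain ⟨x2, hx2, hg2, hF2⟩ := hq
        refine ⟨a • x1 + b • x2, hXcvx hx1 hx2 ha hb hab, ?_, ?_⟩
        · have hcg := hg.2 (Set.mem_univ x1) (Set.mem_univ x2) ha hb hab
          calc g (a • x1 + b • x2) ≤ a * g x1 + b * g x2 := by simpa [smul_eq_mul] using hcg
            _ < a * p.1 + b * q.1 := combo_lt ha hb hab hg1 hg2
            _ = (a • p + b • q).1 := by simp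
        · have hcf := hf.2 (Set.mem_univ x1) (Set.mem_univ x2) ha hb hab
          have hnrm : ‖a • x1 + b • x2‖ ≤ a * ‖x1‖ + b * ‖x2‖ := by
            calc ‖a • x1 + b • x2‖ ≤ ‖a • x1‖ + ‖b • x2‖ := norm_add_le _ _
              _ = a * ‖x1‖ + b * ‖x2‖ := by
                  rw [norm_smul, norm_smul, Real.norm_eq_abs, Real.norm_eq_abs,
                    abs_of_nonneg ha, abs_of_nonneg hb]
          have hFle : F (a • x1 + b • x2) ≤ a * F x1 + b * F x2 := by
            simp only [hF]
            have := mul_le_mul_of_nonneg_left hnrm hμ.le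
            have h := hcf
            simp only [smul_eq_mul] at h
            nlinarith
          calc F (a • x1 + b • x2) ≤ a * F x1 + b * F x2 := hFle
            _ < a * p.2 + b * q.2 := combo_lt ha hb hab hF1 hF2
            _ = (a • p + b • q).2 := by simp
      have hptA : ((0 : ℝ), r) ∉ A := by
        rw [hmemA]
        rintro ⟨x, hx, hgx, hFx⟩
        exact absurd hFx (not_lt.2 (hrP x hx hgx.le).le)
      obtain ⟨φ, hφ⟩ := geometric_hahn_banach_open_point hAcvx hAopen hptA
      set a : ℝ := φ (1, 0) with hadef
      set b : ℝ := φ (0, 1) with hbdef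
      have hφeq : ∀ u v : ℝ, φ (u, v) = u * a + v * b := by
        intro u v
        have h : (u, v) = u • ((1 : ℝ), (0 : ℝ)) + v • ((0 : ℝ), (1 : ℝ)) := by
          simp [Prod.ext_iff]
        rw [h, map_add, map_smul, map_smul, smul_eq_mul, smul_eq_mul]
      have hφr : φ (0, r) = r * b := by rw [hφeq]; ring
      -- key inequality
      have hkeyδ : ∀ x ∈ 𝒳, ∀ δ > (0:ℝ),
          (g x + δ) * a + (F x + δ) * b < r * b := by
        intro x hx δ hδ
        have hmem : ((g x + δ, F x + δ) : ℝ × ℝ) ∈ A := by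
          rw [hmemA]; exact ⟨x, hx, by simp [hδ], by simp [hδ]⟩
        have := hφ _ hmem
        rwa [hφeq, hφr] at this
      have hkey : ∀ x ∈ 𝒳, g x * a + F x * b ≤ r * b := by
        intro x hx
        have htend : Tendsto (fun δ : ℝ => (g x + δ) * a + (F x + δ) * b)
            (𝓝[>] 0) (𝓝 (g x * a + F x * b)) := by
          have hc : Continuous (fun δ : ℝ => (g x + δ) * a + (F x + δ) * b) :=
            ((continuous_const.add continuous_id).mul continuous_const).add
              ((continuous_const.add continuous_id).mul continuous_const)
          have h2 : Tendsto (fun δ : ℝ => (g x + δ) * a + (F x + δ) * b) (𝓝[>] (0:ℝ))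
              (𝓝 ((g x + 0) * a + (F x + 0) * b)) :=
            (hc.tendsto 0).mono_left nhdsWithin_le_nhds
          simpa using h2
        exact le_of_tendsto htend
          (eventually_nhdsWithin_of_forall fun δ hδ => (hkeyδ x hx δ hδ).le)
      have ha0 : a ≤ 0 := by
        by_contra h
        push_neg at h
        set t : ℝ := max 1 ((r * b - (F xsl + 1) * b - g xsl * a) / a + 1) with ht
        have ht0 : 0 < t := lt_of_lt_of_le one_pos (le_max_left _ _)
        have hmem : ((g xsl + t, F xsl + 1) : ℝ × ℝ) ∈ A := by
          rw [hmemA]; exact ⟨xsl, hxslX, by simp [ht0], by simp⟩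
        have hlt := hφ _ hmem
        rw [hφeq, hφr] at hlt
        have htge : (r * b - (F xsl + 1) * b - g xsl * a) / a + 1 ≤ t := le_max_right _ _
        rw [div_add' _ _ _ (ne_of_gt h), div_le_iff₀ h] at htge
        nlinarith
      have hb0 : b ≤ 0 := by
        by_contra h
        push_neg at h
        set s : ℝ := max 1 ((r * b - (g xsl + 1) * a - F xsl * b) / b + 1) with hs
        have hs0 : 0 < s := lt_of_lt_of_le one_pos (le_max_left _ _)
        have hmem : ((g xsl + 1, F xsl + s) : ℝ × ℝ) ∈ A := by
          rw [hmemA]; exact ⟨xsl, hxslX, by simp, by simp [hs0]⟩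
        have hlt := hφ _ hmem
        rw [hφeq, hφr] at hlt
        have hsge : (r * b - (g xsl + 1) * a - F xsl * b) / b + 1 ≤ s := le_max_right _ _
        rw [div_add' _ _ _ (ne_of_gt h), div_le_iff₀ h] at hsge
        nlinarith
      have hbneg : b < 0 := by
        rcases hb0.lt_or_eq with h | h
        · exact h
        · exfalso
          have hxslkey := hkey xsl hxslX
          rw [h] at hxslkey
          simp only [mul_zero, add_zero] at hxslkey
          have hga : 0 ≤ g xsl * a := by nlinarith
          have haz : a = 0 := by
            rcases ha0.lt_or_eq with ha | ha
            · nlinarith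
            · exact ha
          have hmem : ((g xsl + 1, F xsl + 1) : ℝ × ℝ) ∈ A := by
            rw [hmemA]; exact ⟨xsl, hxslX, by simp, by simp⟩
          have := hφ _ hmem
          rw [hφeq, hφr, haz, h] at this
          simp at this
      -- construct the dual multiplier
      set lam : ℝ := -(a / b) with hlam
      have hlam0 : lam ≤ 0 := by
        rw [hlam, neg_nonpos]
        rw [div_nonneg_iff]; right; exact ⟨ha0, hbneg.le⟩
      have hlow : ∀ x ∈ 𝒳, r ≤ F x - lam * g x := by
        intro x hx
        have h1 := hkey x hx
        have h2 : b * (F x - lam * g x) ≤ b * r := by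
          have : b * (F x - lam * g x) = g x * a + F x * b := by
            rw [hlam]
            field_simp [hbneg.ne]
            ring
          rw [this]
          linarith [h1]
        nlinarith [h2]
      have hdual : (r : EReal) ≤ ⨅ x ∈ 𝒳, ((f x + μ * ‖x‖ - lam * g x : ℝ) : EReal) := by
        refine le_iInf₂ fun x hx => ?_
        exact_mod_cast hlow x hx
      have : (r : EReal) ≤ ⨆ (lam : ℝ) (_ : lam ≤ 0),
          ⨅ x ∈ 𝒳, ((f x + μ * ‖x‖ - lam * g x : ℝ) : EReal) :=
        le_trans hdual (le_iSup₂ (f := fun (lam : ℝ) (_ : lam ≤ 0) =>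
          ⨅ x ∈ 𝒳, ((f x + μ * ‖x‖ - lam * g x : ℝ) : EReal)) lam hlam0)
      exact absurd (lt_of_le_of_lt this hr1) (lt_irrefl _)
  · -- weak duality
    refine iSup₂_le fun lam hlam => le_sInf ?_
    rintro y ⟨x, hx, hgx, rfl⟩
    calc (⨅ x ∈ 𝒳, ((f x + μ * ‖x‖ - lam * g x : ℝ) : EReal))
        ≤ ((f x + μ * ‖x‖ - lam * g x : ℝ) : EReal) := iInf₂_le x hx
      _ ≤ ((f x + μ * ‖x‖ : ℝ) : EReal) := by
          apply EReal.coe_le_coe_iff.2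
          have : 0 ≤ lam * g x := by nlinarith
          linarith
end

section
/- Let p : ℝᵐ → ℝ ∪ {+∞} be a proper convex function that admits an affine minorant (i.e. there exist μ ∈ ℝᵐ and β ∈ ℝ with p(u) ≥ ⟨μ, u⟩ + β for all u). Then sup_{ε > 0} inf{p(u) : ‖u‖ ≤ ε} = p**(0), where p*(μ) := sup_u (⟨μ, u⟩ − p(u)) and p**(0) := sup_μ (−p*(μ)); equivalently, lim_{ε ↓ 0} inf{p(u) : ‖u‖ ≤ ε} equals the biconjugate of p evaluated at the origin. -/
open scoped RealInnerProductSpace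

/-!
If `t < inf {p u : ‖u‖ ≤ ε}`, the open set `ball 0 ε × (-∞, t')` (for some `t < t'`) misses the
convex epigraph of `p`, and Hahn–Banach separates them by a functional `(w, x) ↦ g w + c x`
with `c ≥ 0` and `t c < u`. Adding a small multiple of the given affine minorant makes the
separator non-vertical, and solving it for `x` yields an affine minorant of `p` with value `t`
at the origin. Conversely an affine minorant `⟪μ, ·⟫ + t` keeps `p ≥ t - ‖μ‖ ε` on the `ε`-ball.
-/

def epigraph {E : Type*} (p : E → EReal) : Set (E × ℝ) :=
  {q | p q.1 ≤ q.2}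

theorem forall_coe_le_iff_forall_mem_epigraph {E : Type*} {p : E → EReal} {a : E → ℝ} :
    (∀ u, (a u : EReal) ≤ p u) ↔ ∀ q ∈ epigraph p, a q.1 ≤ q.2 :=
  ⟨fun h q hq => EReal.coe_le_coe_iff.1 ((h q.1).trans hq),
    fun h u => EReal.le_of_forall_lt_iff_le.1 fun x hx => EReal.coe_le_coe_iff.2 (h (u, x) hx.le)⟩

theorem exists_separation_of_disjoint_ball_prod_Iio {F : Type*} [NormedAddCommGroup F]
    [NormedSpace ℝ F] {T : Set (F × ℝ)} (hT : Convex ℝ T)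
    {ε t t' : ℝ} (hε : 0 < ε) (ht : t < t')
    (hdisj : Disjoint (Metric.ball (0 : F) ε ×ˢ Set.Iio t') T) :
    ∃ (g : F →L[ℝ] ℝ) (c u : ℝ), 0 ≤ c ∧ t * c < u ∧ ∀ q ∈ T, u ≤ g q.1 + q.2 * c := by
  obtain ⟨f, u, hS, hT⟩ := geometric_hahn_banach_open ((convex_ball 0 ε).prod (convex_Iio t'))
    (Metric.isOpen_ball.prod isOpen_Iio) hT hdisj
  have hf : ∀ q : F × ℝ, f q = f.comp (ContinuousLinearMap.inl ℝ F ℝ) q.1 + q.2 * f (0, 1) := by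
    rintro ⟨w, x⟩
    calc f (w, x) = f ((w, 0) + x • (0, 1)) := by
          rw [Prod.smul_mk, Prod.mk_add_mk, smul_zero, add_zero, smul_eq_mul, mul_one, zero_add]
      _ = _ := by rw [map_add, map_smul, smul_eq_mul]; rfl
  have hvert : ∀ r < t', r * f (0, 1) < u := fun r hr => by
    have h0r := hS (0, r) ⟨Metric.mem_ball_self hε, hr⟩
    rwa [hf, map_zero, zero_add] at h0r
  refine ⟨_, f (0, 1), u, ?_, hvert t ht, fun q hq => hf q ▸ hT q hq⟩
  -- with `c < 0`, `r * c` would exceed `u` for `r` far below `t'`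
  by_contra! hc
  have hlt := hvert (min t (u / f (0, 1))) ((min_le_left _ _).trans_lt ht)
  have hge : u ≤ min t (u / f (0, 1)) * f (0, 1) := (le_div_iff_of_neg hc).1 (min_le_right _ _)
  linarith

variable {E : Type*} [NormedAddCommGroup E] [InnerProductSpace ℝ E]

noncomputable def convexConjugate (p : E → EReal) (μ : E) : EReal :=
  ⨆ u, ((⟪μ, u⟫ : ℝ) : EReal) - p u

theorem coe_le_neg_convexConjugate_iff {p : E → EReal} {μ : E} {t : ℝ} :
    (t : EReal) ≤ -convexConjugate p μ ↔ ∀ u, ((⟪μ, u⟫ + t : ℝ) : EReal) ≤ p u := by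
  rw [EReal.le_neg, convexConjugate, iSup_le_iff]
  refine forall_congr' fun u => ?_
  induction p u using EReal.rec with
  | bot => simp
  | top => simp
  | coe y =>
    norm_cast
    constructor <;> intro <;> linarith

theorem convex_epigraph {p : E → EReal}
    (hpconvex : ∀ u w : E, ∀ θ : ℝ, 0 ≤ θ → θ ≤ 1 →
      p (θ • u + (1 - θ) • w) ≤ (θ : EReal) * p u + ((1 - θ : ℝ) : EReal) * p w) :
    Convex ℝ (epigraph p) := by
  rintro ⟨w₁, x₁⟩ (h₁ : p w₁ ≤ x₁) ⟨w₂, x₂⟩ (h₂ : p w₂ ≤ x₂) a b ha hb hab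
  obtain rfl : b = 1 - a := by linarith
  refine (hpconvex w₁ w₂ a ha (by linarith)).trans ?_
  simp only [Prod.smul_mk, Prod.mk_add_mk, smul_eq_mul, EReal.coe_add, EReal.coe_mul]
  gcongr

theorem coe_le_iSup_sInf_closedBall_of_minorant {p : E → EReal} {μ : E} {t : ℝ}
    (h : ∀ u, ((⟪μ, u⟫ + t : ℝ) : EReal) ≤ p u) :
    (t : EReal) ≤
      ⨆ ε : {e : ℝ // 0 < e}, sInf {y : EReal | ∃ u : E, ‖u‖ ≤ (ε : ℝ) ∧ y = p u} := by
  refine EReal.ge_of_forall_gt_iff_ge.1 fun s hs => ?_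
  have hst : 0 < t - s := sub_pos.2 (EReal.coe_lt_coe_iff.1 hs)
  set ε := (t - s) / (‖μ‖ + 1)
  have hε : (‖μ‖ + 1) * ε = t - s := mul_div_cancel₀ _ (by positivity)
  have hεpos : 0 < ε := by positivity
  refine le_iSup_of_le ⟨ε, hεpos⟩ (le_sInf ?_)
  rintro _ ⟨u, hu, rfl⟩
  refine le_trans (EReal.coe_le_coe_iff.2 ?_) (h u)
  have hinner : |⟪μ, u⟫| ≤ ‖μ‖ * ε :=
    (abs_real_inner_le_norm μ u).trans (mul_le_mul_of_nonneg_left hu (norm_nonneg μ))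
  nlinarith [neg_abs_le ⟪μ, u⟫]

theorem iSup_neg_convexConjugate_le_iSup_sInf_closedBall (p : E → EReal) :
    ⨆ μ, -convexConjugate p μ ≤
      ⨆ ε : {e : ℝ // 0 < e}, sInf {y : EReal | ∃ u : E, ‖u‖ ≤ (ε : ℝ) ∧ y = p u} :=
  iSup_le fun _ => EReal.ge_of_forall_gt_iff_ge.1 fun _ ht =>
    coe_le_iSup_sInf_closedBall_of_minorant (coe_le_neg_convexConjugate_iff.1 ht.le)

theorem exists_inner_add_le_of_separated [CompleteSpace E] {T : Set (E × ℝ)} {g : E →L[ℝ] ℝ}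
    {c u t β : ℝ} {ν : E} (hc : 0 ≤ c) (htc : t * c < u)
    (hsep : ∀ q ∈ T, u ≤ g q.1 + q.2 * c) (hν : ∀ q ∈ T, ⟪ν, q.1⟫ + β ≤ q.2) :
    ∃ μ : E, ∀ q ∈ T, ⟪μ, q.1⟫ + t ≤ q.2 := by
  obtain ⟨k, hk, hkt⟩ : ∃ k : ℝ, 0 < k ∧ k * (t - β) ≤ u - t * c := by
    rcases le_or_gt (t - β) 0 with h | h
    · exact ⟨1, one_pos, by linarith⟩
    · exact ⟨(u - t * c) / (t - β), div_pos (by linarith) h, (div_mul_cancel₀ _ h.ne').le⟩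
  have hck : 0 < c + k := by linarith
  refine ⟨(c + k)⁻¹ • (k • ν - (InnerProductSpace.toDual ℝ E).symm g), fun q hq => ?_⟩
  have hcombined : k * ⟪ν, q.1⟫ - g q.1 + (c + k) * t ≤ (c + k) * q.2 := by
    nlinarith [hsep q hq, mul_le_mul_of_nonneg_left (hν q hq) hk.le]
  rw [real_inner_smul_left, inner_sub_left, real_inner_smul_left,
    InnerProductSpace.toDual_symm_apply]
  calc (c + k)⁻¹ * (k * ⟪ν, q.1⟫ - g q.1) + t
      = (c + k)⁻¹ * (k * ⟪ν, q.1⟫ - g q.1 + (c + k) * t) := by field_simp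
    _ ≤ (c + k)⁻¹ * ((c + k) * q.2) := by gcongr
    _ = q.2 := inv_mul_cancel_left₀ hck.ne' _

theorem exists_minorant_of_le_on_ball [CompleteSpace E] {p : E → EReal}
    (hpconvex : ∀ u w : E, ∀ θ : ℝ, 0 ≤ θ → θ ≤ 1 →
      p (θ • u + (1 - θ) • w) ≤ (θ : EReal) * p u + ((1 - θ : ℝ) : EReal) * p w)
    {ν : E} {β : ℝ} (hν : ∀ u, ((⟪ν, u⟫ + β : ℝ) : EReal) ≤ p u)
    {ε t t' : ℝ} (hε : 0 < ε) (ht : t < t') (hball : ∀ u, ‖u‖ < ε → (t' : EReal) ≤ p u) :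
    ∃ μ : E, ∀ u, ((⟪μ, u⟫ + t : ℝ) : EReal) ≤ p u := by
  have hdisj : Disjoint (Metric.ball (0 : E) ε ×ˢ Set.Iio t') (epigraph p) := by
    refine Set.disjoint_left.2 fun q ⟨hw, hx⟩ hq => ?_
    have ht'q := EReal.coe_le_coe_iff.1 ((hball q.1 (mem_ball_zero_iff.1 hw)).trans hq)
    exact (Set.mem_Iio.1 hx).not_ge ht'q
  obtain ⟨g, c, u, hc, htc, hsep⟩ :=
    exists_separation_of_disjoint_ball_prod_Iio (convex_epigraph hpconvex) hε ht hdisj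
  obtain ⟨μ, hμ⟩ := exists_inner_add_le_of_separated hc htc hsep
    (forall_coe_le_iff_forall_mem_epigraph.1 hν)
  exact ⟨μ, forall_coe_le_iff_forall_mem_epigraph.2 hμ⟩

theorem iSup_sInf_closedBall_le_iSup_neg_convexConjugate [CompleteSpace E] {p : E → EReal}
    (hpconvex : ∀ u w : E, ∀ θ : ℝ, 0 ≤ θ → θ ≤ 1 →
      p (θ • u + (1 - θ) • w) ≤ (θ : EReal) * p u + ((1 - θ : ℝ) : EReal) * p w)
    {ν : E} {β : ℝ} (hν : ∀ u, ((⟪ν, u⟫ + β : ℝ) : EReal) ≤ p u) :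
    ⨆ ε : {e : ℝ // 0 < e}, sInf {y : EReal | ∃ u : E, ‖u‖ ≤ (ε : ℝ) ∧ y = p u} ≤
      ⨆ μ, -convexConjugate p μ := by
  refine EReal.ge_of_forall_gt_iff_ge.1 fun t ht => ?_
  obtain ⟨⟨ε, hε⟩, htε⟩ := lt_iSup_iff.1 ht
  obtain ⟨t', htt', ht'⟩ := EReal.lt_iff_exists_real_btwn.1 htε
  obtain ⟨μ, hμ⟩ := exists_minorant_of_le_on_ball hpconvex hν hε (EReal.coe_lt_coe_iff.1 htt')
    fun u hu => ht'.le.trans (sInf_le ⟨u, hu.le, rfl⟩)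
  exact le_iSup_of_le μ (coe_le_neg_convexConjugate_iff.2 hμ)

theorem limit_inf_eq_biconjugate_at_zero_general {m : ℕ}
    (p : EuclideanSpace ℝ (Fin m) → EReal)
    (hpconvex : ∀ u w : EuclideanSpace ℝ (Fin m), ∀ θ : ℝ, 0 ≤ θ → θ ≤ 1 →
      p (θ • u + (1 - θ) • w) ≤ (θ : EReal) * p u + ((1 - θ : ℝ) : EReal) * p w)
    (hminorant : ∃ (μ : EuclideanSpace ℝ (Fin m)) (β : ℝ),
      ∀ u, ((⟪μ, u⟫ + β : ℝ) : EReal) ≤ p u) :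
    ⨆ ε : {e : ℝ // 0 < e}, sInf {y : EReal |
        ∃ u : EuclideanSpace ℝ (Fin m), ‖u‖ ≤ (ε : ℝ) ∧ y = p u} =
      ⨆ μ : EuclideanSpace ℝ (Fin m),
        -(⨆ u : EuclideanSpace ℝ (Fin m), (((⟪μ, u⟫ : ℝ) : EReal) - p u)) := by
  obtain ⟨_, _, hν⟩ := hminorant
  exact le_antisymm (iSup_sInf_closedBall_le_iSup_neg_convexConjugate hpconvex hν)
    (iSup_neg_convexConjugate_le_iSup_sInf_closedBall p)

/-- **The limiting infimum near the origin equals the biconjugate at the origin.**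
Let `p : ℝᵐ → ℝ ∪ {+∞}` be proper convex with an affine minorant.  Then
`sup_{ε > 0} inf {p(u) : ‖u‖ ≤ ε} = p**(0)`, where `p*(μ) = sup_u (⟨μ, u⟩ - p(u))` and
`p**(0) = sup_μ (-p*(μ))`; i.e. `lim_{ε ↓ 0} inf {p(u) : ‖u‖ ≤ ε}` is the biconjugate
of `p` at the origin. -/
theorem limit_inf_eq_biconjugate_at_zero {m : ℕ}
    (p : EuclideanSpace ℝ (Fin m) → EReal)
    (hpbot : ∀ u, p u ≠ ⊥)
    (hpproper : ∃ u, p u ≠ ⊤)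
    (hpconvex : ∀ u w : EuclideanSpace ℝ (Fin m), ∀ θ : ℝ, 0 ≤ θ → θ ≤ 1 →
      p (θ • u + (1 - θ) • w) ≤ (θ : EReal) * p u + ((1 - θ : ℝ) : EReal) * p w)
    (hminorant : ∃ (μ : EuclideanSpace ℝ (Fin m)) (β : ℝ),
      ∀ u, ((⟪μ, u⟫ + β : ℝ) : EReal) ≤ p u) :
    ⨆ ε : {e : ℝ // 0 < e}, sInf {y : EReal |
        ∃ u : EuclideanSpace ℝ (Fin m), ‖u‖ ≤ (ε : ℝ) ∧ y = p u} =
      ⨆ μ : EuclideanSpace ℝ (Fin m),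
        -(⨆ u : EuclideanSpace ℝ (Fin m), (((⟪μ, u⟫ : ℝ) : EReal) - p u)) :=
  limit_inf_eq_biconjugate_at_zero_general p hpconvex hminorant
end

section
/- If (y₁, y₂) ∈ ℝ² is such that the 3×3 matrix with rows (y₁, 0, y₂−1), (0, y₂, 0), (y₂−1, 0, 0) is positive semidefinite, then y₂ = 1. Consequently sup{−y₂ : (y₁, y₂) ∈ ℝ², the above matrix is PSD} = −1, and this supremum is attained (e.g. at y₁ = 0, y₂ = 1); so the dual optimal value of the SDP minimize −2·X₂₀ subject to X₀₀ = 0, X₁₁ + 2·X₂₀ = 1, X PSD, equals −1, strictly below the primal optimal value 0. -/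
open Matrix

/-- **SDP with finite duality gap: dual optimal value.**  If the 3×3 matrix
`[[y₁, 0, y₂-1], [0, y₂, 0], [y₂-1, 0, 0]]` is positive semidefinite then `y₂ = 1`.
Consequently `sup {-y₂ : the matrix is PSD} = -1`, attained at `y₁ = 0, y₂ = 1`;
the dual optimal value `-1` lies strictly below the primal optimal value `0` of the SDP
`min -2·X₂₀ s.t. X ⪰ 0, X₀₀ = 0, X₁₁ + 2·X₂₀ = 1`. -/
theorem sdp_finite_gap_dual
    (PSD : ∀ {k : ℕ}, Matrix (Fin k) (Fin k) ℝ → Prop)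
    (hPSD : ∀ {k : ℕ} (X : Matrix (Fin k) (Fin k) ℝ),
      PSD X ↔ X.IsSymm ∧ ∀ y : Fin k → ℝ, 0 ≤ y ⬝ᵥ X.mulVec y) :
    (∀ y₁ y₂ : ℝ, PSD !![y₁, 0, y₂ - 1; 0, y₂, 0; y₂ - 1, 0, 0] → y₂ = 1) ∧
      IsGreatest {r : ℝ | ∃ y₁ y₂ : ℝ,
        PSD !![y₁, 0, y₂ - 1; 0, y₂, 0; y₂ - 1, 0, 0] ∧ r = -y₂} (-1) ∧
      sInf {t : EReal | ∃ X : Matrix (Fin 3) (Fin 3) ℝ,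
        PSD X ∧ X 0 0 = 0 ∧ X 1 1 + 2 * X 2 0 = 1 ∧
          t = ((-2 * X 2 0 : ℝ) : EReal)} = 0 ∧
      ((-1 : EReal) < (0 : EReal)) := by
  have key : ∀ y₁ y₂ : ℝ, PSD !![y₁, 0, y₂ - 1; 0, y₂, 0; y₂ - 1, 0, 0] → y₂ = 1 := by
    intro y₁ y₂ h
    obtain ⟨-, hq⟩ := (hPSD _).1 h
    have h1 := hq ![y₂ - 1, 0, -(y₁/2 + 1)]
    simp [mulVec, dotProduct, Fin.sum_univ_three, vecHead, vecTail] at h1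
    nlinarith [sq_nonneg (y₂ - 1)]
  refine ⟨key, ⟨⟨0, 1, ?_, by norm_num⟩, ?_⟩, ?_, ?_⟩
  · rw [hPSD]
    constructor
    · ext i j
      fin_cases i <;> fin_cases j <;> simp [Matrix.IsSymm, vecHead, vecTail]
    · intro y
      simp [mulVec, dotProduct, Fin.sum_univ_three, vecHead, vecTail]
      nlinarith [sq_nonneg (y 1)]
  · rintro r ⟨y₁, y₂, h, rfl⟩
    have := key y₁ y₂ h
    simp [this]
  · have hset : {t : EReal | ∃ X : Matrix (Fin 3) (Fin 3) ℝ,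
        PSD X ∧ X 0 0 = 0 ∧ X 1 1 + 2 * X 2 0 = 1 ∧
          t = ((-2 * X 2 0 : ℝ) : EReal)} = {0} := by
      ext t
      simp only [Set.mem_setOf_eq, Set.mem_singleton_iff]
      constructor
      · rintro ⟨X, hX, h00, h11, rfl⟩
        obtain ⟨hs, hq⟩ := (hPSD _).1 hX
        have h02 : X 0 2 = X 2 0 := by
          have := congrFun (congrFun hs 2) 0
          simpa using this
        have h20 : X 2 0 = 0 := by
          have ha : ∀ a : ℝ, 0 ≤ 2 * X 2 0 * a + X 2 2 := by
            intro a
            have := hq ![a, 0, 1]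
            simp [mulVec, dotProduct, Fin.sum_univ_three, vecHead, vecTail, h00] at this
            rw [h02] at this
            linarith
          by_contra hne
          have h2 : (2:ℝ) * X 2 0 ≠ 0 := mul_ne_zero two_ne_zero hne
          have hv := ha (-(X 2 2 + 1) / (2 * X 2 0))
          have h3 : 2 * X 2 0 * (-(X 2 2 + 1) / (2 * X 2 0)) = -(X 2 2 + 1) := by
            field_simp
          rw [h3] at hv
          linarith
        simp [h20]
      · rintro rfl
        refine ⟨!![0,0,0;0,1,0;0,0,0], ?_, by simp, by simp [vecHead, vecTail], ?_⟩
        · rw [hPSD]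
          constructor
          · ext i j; fin_cases i <;> fin_cases j <;> simp [Matrix.IsSymm, vecHead, vecTail]
          · intro y
            simp [mulVec, dotProduct, Fin.sum_univ_three, vecHead, vecTail]
            nlinarith [sq_nonneg (y 1)]
        · simp [vecHead, vecTail]
    rw [hset, csInf_singleton]
  · have h : ((-1:ℝ):EReal) < ((0:ℝ):EReal) := EReal.coe_lt_coe_iff.mpr (by norm_num)
    simpa using h
end

section
/- Define v(τ) := inf{X₀₀² + (X₁₁ + 2·X₂₀ − 1)² : X a real symmetric positive semidefinite 3×3 matrix with −2·X₂₀ ≤ τ}. Then v(τ) = 0 for every τ ≥ −1; moreover, for every τ with −1 < τ < 0 the infimum is not attained: there is no symmetric PSD 3×3 matrix X with −2·X₂₀ ≤ τ, X₀₀ = 0 and X₁₁ + 2·X₂₀ = 1. -/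
/-!
For `τ ≥ -1` the rank-one matrices `X_ε = (4ε)⁻¹ v vᵀ` with `v = (2ε, 0, 1)` are feasible
(`-2 X₂₀ = -1`) with objective value `ε²`, so the infimum is `0`. It is not attained when
`τ < 0`: a positive semidefinite matrix with `X₀₀ = 0` has principal minor
`X₀₀ X₂₂ - X₂₀² = -X₂₀² ≥ 0`, forcing `X₂₀ = 0`, which contradicts `-2 X₂₀ ≤ τ < 0`.
-/

open Matrix

theorem Matrix.posSemidef_iff_isSymm_and_dotProduct_mulVec_nonneg {n R : Type*} [Fintype n]
    [CommRing R] [PartialOrder R] [StarRing R] [TrivialStar R] {X : Matrix n n R} :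
    X.PosSemidef ↔ X.IsSymm ∧ ∀ y : n → R, 0 ≤ y ⬝ᵥ X *ᵥ y := by
  simp [posSemidef_iff_dotProduct_mulVec, IsHermitian, IsSymm]

theorem Matrix.PosSemidef.apply_eq_zero_of_apply_self_eq_zero {n : Type*} [Fintype n]
    {X : Matrix n n ℝ} (hX : X.PosSemidef) {i : n} (hi : X i i = 0) (j : n) : X j i = 0 := by
  have hminor := (hX.submatrix ![i, j]).det_nonneg
  have hsymm : X i j = X j i := by simpa using hX.1.apply j i
  simp only [det_fin_two, submatrix_apply, Matrix.cons_val_zero, Matrix.cons_val_one, hi,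
    hsymm, zero_mul, zero_sub, Left.nonneg_neg_iff] at hminor
  nlinarith [sq_nonneg (X j i)]

theorem EReal.sInf_eq_zero_of_nonneg_of_forall_pos_mem {S : Set EReal}
    (hnonneg : ∀ t ∈ S, 0 ≤ t) (hpos : ∀ x : ℝ, 0 < x → (x : EReal) ∈ S) : sInf S = 0 := by
  refine sInf_eq_of_forall_ge_of_forall_gt_exists_lt hnonneg fun w hw => ?_
  obtain ⟨x, hx, hxw⟩ := EReal.lt_iff_exists_real_btwn.mp hw
  exact ⟨x, hpos x (by exact_mod_cast hx), hxw⟩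

noncomputable def levelSetWitness (ε : ℝ) : Matrix (Fin 3) (Fin 3) ℝ :=
  !![ε, 0, 1 / 2; 0, 0, 0; 1 / 2, 0, 1 / (4 * ε)]

theorem levelSetWitness_eq_smul_vecMulVec {ε : ℝ} (hε : ε ≠ 0) :
    levelSetWitness ε = (4 * ε)⁻¹ • vecMulVec ![2 * ε, 0, 1] ![2 * ε, 0, 1] := by
  ext i j
  fin_cases i <;> fin_cases j <;> simp [levelSetWitness, vecMulVec] <;> field_simp <;> ring

theorem posSemidef_levelSetWitness {ε : ℝ} (hε : 0 < ε) : (levelSetWitness ε).PosSemidef := by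
  rw [levelSetWitness_eq_smul_vecMulVec hε.ne']
  exact (posSemidef_vecMulVec_self_star _).smul (by positivity)

/-- **SDP with finite duality gap: level-set value function and non-attainment.**
Define `v(τ) = inf {X₀₀² + (X₁₁ + 2·X₂₀ - 1)² : X symmetric PSD 3×3, -2·X₂₀ ≤ τ}`.
Then `v(τ) = 0` for every `τ ≥ -1`; moreover for `-1 < τ < 0` the infimum is not
attained: no symmetric PSD 3×3 matrix satisfies `-2·X₂₀ ≤ τ`, `X₀₀ = 0` and
`X₁₁ + 2·X₂₀ = 1`. -/
theorem sdp_finite_gap_level_set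
    (PSD : Matrix (Fin 3) (Fin 3) ℝ → Prop)
    (hPSD : ∀ X, PSD X ↔ X.IsSymm ∧ ∀ y : Fin 3 → ℝ, 0 ≤ y ⬝ᵥ X.mulVec y)
    (v : ℝ → EReal)
    (hv : ∀ τ : ℝ, v τ = sInf {t : EReal | ∃ X : Matrix (Fin 3) (Fin 3) ℝ,
      PSD X ∧ (-2 * X 2 0 : ℝ) ≤ τ ∧
        t = ((X 0 0 ^ 2 + (X 1 1 + 2 * X 2 0 - 1) ^ 2 : ℝ) : EReal)}) :
    (∀ τ : ℝ, -1 ≤ τ → v τ = 0) ∧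
      ∀ τ : ℝ, -1 < τ → τ < 0 →
        ¬ ∃ X : Matrix (Fin 3) (Fin 3) ℝ,
          PSD X ∧ (-2 * X 2 0 : ℝ) ≤ τ ∧ X 0 0 = 0 ∧ X 1 1 + 2 * X 2 0 = 1 := by
  simp_rw [← posSemidef_iff_isSymm_and_dotProduct_mulVec_nonneg] at hPSD
  refine ⟨fun τ hτ => ?_, ?_⟩
  · rw [hv]
    refine EReal.sInf_eq_zero_of_nonneg_of_forall_pos_mem ?_ fun x hx => ?_
    · rintro t ⟨X, -, -, rfl⟩
      exact_mod_cast (by positivity : (0 : ℝ) ≤ X 0 0 ^ 2 + (X 1 1 + 2 * X 2 0 - 1) ^ 2)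
    · refine ⟨levelSetWitness √x, (hPSD _).2 (posSemidef_levelSetWitness (Real.sqrt_pos.2 hx)),
        ?_, ?_⟩ <;> simp [levelSetWitness, Real.sq_sqrt hx.le]
      linarith
  · rintro τ - hτ ⟨X, hX, hfeas, h00, -⟩
    have h20 : X 2 0 = 0 := ((hPSD X).1 hX).apply_eq_zero_of_apply_self_eq_zero h00 2
    linarith
end
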